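/- arXiv:math/0506409 — 6 statements merged into one kernel-verified Lean document; each statement's English description precedes it below -/
import Mathlib

section
/- If ψ : Ω × □^n → ℝ is an admissible function, then there exist a set X ⊆ Ω with |Ω \ X| = 0 and a set Y ⊆ □ with |□ \ Y| = 0 such that the restriction of ψ to X × Y^n is Borel measurable. In particular, for every fixed ε > 0 the function x ↦ ψ(x, ⟨x/ρ_1(ε)⟩, …, ⟨x/ρ_n(ε)⟩) is Lebesgue measurable on Ω. -/
/-!
Choose, for `δ = 2⁻ᵐ`, compact sets `Xₘ ⊆ Ω`, `Yₘ ⊆ □` with `ψ` continuous on `Xₘ × Yₘⁿ`, and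
put `X = ⋃_M ⋂_{m ≥ M} Xₘ`, `Y = ⋃_M ⋂_{m ≥ M} Yₘ`. By Borel–Cantelli, `Ω \ X` and `□ \ Y` are
null, and `X × Yⁿ` is the increasing union of the closed sets `⋂_{m ≥ M} Xₘ × (⋂_{m ≥ M} Yₘ)ⁿ`,
on each of which `ψ` is continuous; so `ψ` is Borel on `X × Yⁿ`.
The map `x ↦ ⟨x / r⟩` pulls null sets back to null sets, its preimage of `N` being covered by
countably many translates of `r • N`. Hence `x ↦ (x, ⟨x / ρ_k(ε)⟩_k)` is a measurable map sending
almost every `x ∈ Ω` into `X × Yⁿ`, and its composite with `ψ` is a.e. measurable.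
-/

open MeasureTheory Filter Topology

/-- The unit cell `□ = [0,1)^d` in `ℝ^d`. -/
def unitCell (d : ℕ) : Set (Fin d → ℝ) := Set.univ.pi fun _ => Set.Ico (0 : ℝ) 1

/-- A function `ψ : Ω × □^n → ℝ` is *admissible* if for every `δ > 0` there are
compact sets `X ⊆ Ω` and `Y ⊆ □` whose complements have measure at most `δ`
such that the restriction of `ψ` to `X × Y^n` is continuous. -/
def AdmissibleFun {d n : ℕ} (Ω : Set (Fin d → ℝ))
    (ψ : (Fin d → ℝ) → (Fin n → Fin d → ℝ) → ℝ) : Prop :=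
  ∀ δ > (0 : ℝ), ∃ X : Set (Fin d → ℝ),
    IsCompact X ∧ X ⊆ Ω ∧ volume (Ω \ X) ≤ ENNReal.ofReal δ ∧
    ∃ Y : Set (Fin d → ℝ),
      IsCompact Y ∧ Y ⊆ unitCell d ∧ volume (unitCell d \ Y) ≤ ENNReal.ofReal δ ∧
      ContinuousOn (fun p : (Fin d → ℝ) × (Fin n → Fin d → ℝ) => ψ p.1 p.2)
        (X ×ˢ Set.univ.pi fun _ => Y)

open Set ENNReal
open scoped Pointwise

theorem monotone_iInter_ge {α : Type*} (s : ℕ → Set α) : Monotone fun M => ⋂ i ≥ M, s i :=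
  fun _ _ hMN _ hx => mem_iInter₂.2 fun i hi => mem_iInter₂.1 hx i (hMN.trans hi)

section General

variable {α β γ : Type*} [MeasurableSpace α] [MeasurableSpace β] [MeasurableSpace γ]

theorem measure_diff_iUnion_iInter_ge_eq_zero {μ : Measure α} {A : Set α} {s : ℕ → Set α}
    (h : ∑' i, μ (A \ s i) ≠ ∞) : μ (A \ ⋃ M, ⋂ i ≥ M, s i) = 0 := by
  have hliminf : ⋃ M, ⋂ i ≥ M, s i = liminf s atTop := liminf_eq_iSup_iInf_of_nat.symm
  rw [hliminf, sdiff_liminf]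
  exact measure_limsup_atTop_eq_zero h

theorem measurable_domRestrict_iUnion {ι : Type*} [Countable ι] {t : ι → Set α}
    (ht : ∀ i, MeasurableSet (t i)) {f : α → β} (hf : ∀ i, Measurable ((t i).domRestrict f)) :
    Measurable ((⋃ i, t i).domRestrict f) :=
  measurable_iUnionLift (f := fun i => (t i).domRestrict f) (fun _ _ _ _ _ => rfl) subset_rfl ht hf

theorem aemeasurable_comp_of_measurable_domRestrict {μ : Measure γ} {S : Set α}
    (hS : MeasurableSet S) {f : α → β} (hf : Measurable (S.domRestrict f)) {g : γ → α}
    (hg : Measurable g) (hgS : ∀ᵐ x ∂μ, g x ∈ S) : AEMeasurable (f ∘ g) μ := by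
  have hS_ae : ∀ᵐ y ∂μ.map g, y ∈ S := (ae_map_iff hg.aemeasurable hS).2 hgS
  have hf_ae : AEMeasurable f ((μ.map g).restrict S) :=
    aemeasurable_restrict_of_measurable_subtype hS hf
  rw [Measure.restrict_eq_self_of_ae_mem hS_ae] at hf_ae
  exact hf_ae.comp_measurable hg

end General

theorem volume_preimage_fract_div_eq_zero {d : ℕ} {r : ℝ} (hr : 0 < r) {N : Set (Fin d → ℝ)}
    (hN : volume N = 0) : volume {x : Fin d → ℝ | (fun i => Int.fract (x i / r)) ∈ N} = 0 := by
  have hsub : {x : Fin d → ℝ | (fun i => Int.fract (x i / r)) ∈ N} ⊆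
      ⋃ z : Fin d → ℤ, (fun i => r * (z i : ℝ)) +ᵥ r • N := by
    intro x hx
    refine mem_iUnion.2 ⟨fun i => ⌊x i / r⌋, r • fun i => Int.fract (x i / r),
      smul_mem_smul_set hx, funext fun i => ?_⟩
    change r * (⌊x i / r⌋ : ℝ) + r * Int.fract (x i / r) = x i
    rw [← mul_add, Int.floor_add_fract, mul_div_cancel₀ _ hr.ne']
  refine measure_mono_null hsub (measure_iUnion_null fun z => ?_)
  rw [measure_vadd, Measure.addHaar_smul, hN, mul_zero]

theorem ae_fract_div_mem {d : ℕ} {r : ℝ} (hr : 0 < r) {Y : Set (Fin d → ℝ)}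
    (hY : volume (unitCell d \ Y) = 0) : ∀ᵐ x : Fin d → ℝ, (fun i => Int.fract (x i / r)) ∈ Y :=
  ae_iff.2 <| measure_mono_null (t := {x | (fun i => Int.fract (x i / r)) ∈ unitCell d \ Y})
    (fun _ hx => ⟨fun _ _ => ⟨Int.fract_nonneg _, Int.fract_lt_one _⟩, hx⟩)
    (volume_preimage_fract_div_eq_zero hr hY)

theorem AdmissibleFun.exists_measurable_domRestrict {d n : ℕ} {Ω : Set (Fin d → ℝ)}
    {ψ : (Fin d → ℝ) → (Fin n → Fin d → ℝ) → ℝ} (hψ : AdmissibleFun Ω ψ) :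
    ∃ X ⊆ Ω, ∃ Y ⊆ unitCell d, MeasurableSet X ∧ MeasurableSet Y ∧
      volume (Ω \ X) = 0 ∧ volume (unitCell d \ Y) = 0 ∧
      Measurable ((X ×ˢ univ.pi fun _ : Fin n => Y).domRestrict
        (fun p : (Fin d → ℝ) × (Fin n → Fin d → ℝ) => ψ p.1 p.2)) := by
  choose Xs hXc hXΩ hXv Ys hYc hYcell hYv hcont using
    fun m : ℕ => hψ ((1 / 2) ^ m) (by positivity)
  have hsum : ∑' m : ℕ, ENNReal.ofReal ((1 / 2) ^ m) ≠ ∞ := by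
    rw [← ENNReal.ofReal_tsum_of_nonneg (fun _ => by positivity) summable_geometric_two]
    exact ofReal_ne_top
  set X' := fun M => ⋂ i ≥ M, Xs i
  set Y' := fun M => ⋂ i ≥ M, Ys i
  have hX'Xs (M : ℕ) : X' M ⊆ Xs M := iInter₂_subset M le_rfl
  have hY'Ys (M : ℕ) : Y' M ⊆ Ys M := iInter₂_subset M le_rfl
  have hX'c (M : ℕ) : IsClosed (X' M) := isClosed_biInter fun i _ => (hXc i).isClosed
  have hY'c (M : ℕ) : IsClosed (Y' M) := isClosed_biInter fun i _ => (hYc i).isClosed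
  have hprod : (⋃ M, X' M) ×ˢ univ.pi (fun _ : Fin n => ⋃ M, Y' M) =
      ⋃ M, X' M ×ˢ univ.pi fun _ : Fin n => Y' M := by
    rw [← iUnion_univ_pi_of_monotone fun _ => monotone_iInter_ge Ys,
      iUnion_prod_of_monotone (monotone_iInter_ge Xs)
        fun _ _ hMN => pi_mono fun _ _ => monotone_iInter_ge Ys hMN]
  refine ⟨⋃ M, X' M, iUnion_subset fun M => (hX'Xs M).trans (hXΩ M),
    ⋃ M, Y' M, iUnion_subset fun M => (hY'Ys M).trans (hYcell M),
    .iUnion fun M => (hX'c M).measurableSet, .iUnion fun M => (hY'c M).measurableSet,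
    measure_diff_iUnion_iInter_ge_eq_zero (ne_top_of_le_ne_top hsum (ENNReal.tsum_le_tsum hXv)),
    measure_diff_iUnion_iInter_ge_eq_zero (ne_top_of_le_ne_top hsum (ENNReal.tsum_le_tsum hYv)),
    ?_⟩
  rw [hprod]
  refine measurable_domRestrict_iUnion (fun M => (hX'c M).measurableSet.prod
    (.univ_pi fun _ => (hY'c M).measurableSet)) fun M => ?_
  exact ((hcont M).mono (prod_mono (hX'Xs M) (pi_mono fun _ _ => hY'Ys M))).domRestrict.measurable

theorem statement3_general
    (d n : ℕ)
    (Ω : Set (Fin d → ℝ))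
    (ρ : Fin n → ℝ → ℝ) (hρpos : ∀ k e, 0 < e → 0 < ρ k e)
    (ψ : (Fin d → ℝ) → (Fin n → Fin d → ℝ) → ℝ) (hψ : AdmissibleFun Ω ψ) :
    ∃ X ⊆ Ω, ∃ Y ⊆ unitCell d,
      volume (Ω \ X) = 0 ∧ volume (unitCell d \ Y) = 0 ∧
      Measurable ((X ×ˢ Set.univ.pi fun _ : Fin n => Y).restrict
        (fun p : (Fin d → ℝ) × (Fin n → Fin d → ℝ) => ψ p.1 p.2)) ∧
      ∀ e : ℝ, 0 < e →
        AEMeasurable (fun x => ψ x (fun k i => Int.fract (x i / ρ k e)))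
          (volume.restrict Ω) := by
  obtain ⟨X, hXΩ, Y, hYcell, hXm, hYm, hX, hY, hmeas⟩ := hψ.exists_measurable_domRestrict
  refine ⟨X, hXΩ, Y, hYcell, hX, hY, hmeas, fun e he => ?_⟩
  have hX_ae : ∀ᵐ x ∂volume.restrict Ω, x ∈ X :=
    ae_iff.2 <| (Measure.restrict_apply hXm.compl).trans (by rwa [← sdiff_eq_compl_inter])
  have hY_ae : ∀ᵐ x ∂volume.restrict Ω, ∀ k, (fun i => Int.fract (x i / ρ k e)) ∈ Y :=
    ae_restrict_of_ae (ae_all_iff.2 fun k => ae_fract_div_mem (hρpos k e he) hY)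
  refine aemeasurable_comp_of_measurable_domRestrict (hXm.prod (.univ_pi fun _ => hYm)) hmeas
    (g := fun x => (x, fun k i => Int.fract (x i / ρ k e))) (by fun_prop) ?_
  filter_upwards [hX_ae, hY_ae] with x hx hy using ⟨hx, fun k _ => hy k⟩

/-- An admissible function is Borel measurable on a full-measure product set;
in particular `x ↦ ψ(x, ⟨x/ρ_1(ε)⟩, …, ⟨x/ρ_n(ε)⟩)` is Lebesgue measurable on `Ω`. -/
theorem statement3
    (d n : ℕ) (hd : 0 < d) (hn : 0 < n)
    (Ω : Set (Fin d → ℝ)) (hΩo : IsOpen Ω) (hΩb : Bornology.IsBounded Ω)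
    (ρ : Fin n → ℝ → ℝ) (hρpos : ∀ k e, 0 < e → 0 < ρ k e)
    (hρ0 : ∀ k, Tendsto (ρ k) (𝓝[>] 0) (𝓝 0))
    (ψ : (Fin d → ℝ) → (Fin n → Fin d → ℝ) → ℝ) (hψ : AdmissibleFun Ω ψ) :
    ∃ X ⊆ Ω, ∃ Y ⊆ unitCell d,
      volume (Ω \ X) = 0 ∧ volume (unitCell d \ Y) = 0 ∧
      Measurable ((X ×ˢ Set.univ.pi fun _ : Fin n => Y).restrict
        (fun p : (Fin d → ℝ) × (Fin n → Fin d → ℝ) => ψ p.1 p.2)) ∧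
      ∀ e : ℝ, 0 < e →
        AEMeasurable (fun x => ψ x (fun k i => Int.fract (x i / ρ k e)))
          (volume.restrict Ω) :=
  statement3_general d n Ω ρ hρpos ψ hψ
end

section
/- If f : Ω × □^n × ℝ^m → [0,∞) is an admissible integrand, then there exist a set X ⊆ Ω with |Ω \ X| = 0 and a set Y ⊆ □ with |□ \ Y| = 0 such that the restriction of f to X × Y^n × ℝ^m is Borel measurable. In particular, for every fixed ε > 0 the function (x, z) ↦ f(x, ⟨x/ρ_1(ε)⟩, …, ⟨x/ρ_n(ε)⟩, z) is measurable with respect to the product of the Lebesgue σ-algebra on Ω and the Borel σ-algebra on ℝ^m. -/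
open MeasureTheory Filter Topology
open scoped ENNReal NNReal

/-- The `n`-fold product `□^n` of unit cells. -/
def unitCellPow (d n : ℕ) : Set (Fin n → Fin d → ℝ) := Set.univ.pi fun _ => unitCell d

/-- A function `f : Ω × □^n × ℝ^m → [0,∞)` is an *admissible integrand* if for every
`δ > 0` there are compact sets `X ⊆ Ω` and `Y ⊆ □` whose complements have measure at
most `δ` such that the restriction of `f` to `X × Y^n × ℝ^m` is continuous. -/
def AdmissibleIntegrand {d n m : ℕ} (Ω : Set (Fin d → ℝ))
    (f : (Fin d → ℝ) → (Fin n → Fin d → ℝ) → (Fin m → ℝ) → ℝ) : Prop :=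
  ∀ δ > (0 : ℝ), ∃ X : Set (Fin d → ℝ),
    IsCompact X ∧ X ⊆ Ω ∧ volume (Ω \ X) ≤ ENNReal.ofReal δ ∧
    ∃ Y : Set (Fin d → ℝ),
      IsCompact Y ∧ Y ⊆ unitCell d ∧ volume (unitCell d \ Y) ≤ ENNReal.ofReal δ ∧
      ContinuousOn
        (fun p : (Fin d → ℝ) × (Fin n → Fin d → ℝ) × (Fin m → ℝ) => f p.1 p.2.1 p.2.2)
        (X ×ˢ (Set.univ.pi fun _ => Y) ×ˢ Set.univ)

/-- If `f` is continuous on a measurable set `s`, then the indicator of `s` with values `f`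
is measurable. -/
lemma aux_indicator_measurable {α β : Type*} [TopologicalSpace α] [MeasurableSpace α]
    [OpensMeasurableSpace α] [TopologicalSpace β] [MeasurableSpace β] [BorelSpace β] [Zero β]
    {f : α → β} {s : Set α} (hs : MeasurableSet s) (hf : ContinuousOn f s) :
    Measurable (s.indicator f) := by
  refine measurable_of_isOpen fun u hu => ?_
  rcases continuousOn_iff'.1 hf u hu with ⟨v, hv, hveq⟩
  have : s.indicator f ⁻¹' u = (s ∩ v) ∪ (sᶜ ∩ {_x : α | (0:β) ∈ u}) := by
    ext x
    by_cases hx : x ∈ s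
    · have hxe : x ∈ f ⁻¹' u ∩ s ↔ x ∈ v ∩ s := by rw [hveq]
      simp only [Set.mem_inter_iff, hx, and_true, Set.mem_preimage] at hxe
      simp only [Set.mem_preimage, Set.indicator_of_mem hx, Set.mem_union, Set.mem_inter_iff,
        hx, true_and, Set.mem_compl_iff, not_true, false_and, or_false]
      exact hxe
    · simp [Set.indicator_of_notMem hx, hx]
  rw [this]
  exact ((hs.inter hv.measurableSet).union (hs.compl.inter (MeasurableSet.const _)))

/-- The preimage of a Lebesgue-null set under `x ↦ (⟨x i / r⟩)_i` is null. -/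
lemma aux_fract_preimage_null {d : ℕ} {r : ℝ} (hr : r ≠ 0) {N : Set (Fin d → ℝ)}
    (hN : volume N = 0) :
    volume {x : Fin d → ℝ | (fun i => Int.fract (x i / r)) ∈ N} = 0 := by
  have hsub : {x : Fin d → ℝ | (fun i => Int.fract (x i / r)) ∈ N} ⊆
      ⋃ j : Fin d → ℤ, (r⁻¹ • ·) ⁻¹' ((fun y => y + fun i => -((j i : ℝ))) ⁻¹' N) := by
    intro x hx
    refine Set.mem_iUnion.2 ⟨fun i => ⌊x i / r⌋, ?_⟩
    have key : ((r⁻¹ • x) + fun i => -((⌊x i / r⌋ : ℝ)) : Fin d → ℝ)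
        = fun i => Int.fract (x i / r) := by
      funext i
      simp only [Pi.add_apply, Pi.smul_apply, smul_eq_mul, Int.fract]
      rw [div_eq_inv_mul]; ring
    show ((r⁻¹ • x) + fun i => -((⌊x i / r⌋ : ℝ)) : Fin d → ℝ) ∈ N
    rw [key]; exact hx
  refine measure_mono_null hsub (measure_iUnion_null fun j => ?_)
  have h1 : volume ((fun y : Fin d → ℝ => y + fun i => -((j i : ℝ))) ⁻¹' N) = 0 := by
    have : (fun y : Fin d → ℝ => y + fun i => -((j i : ℝ)))
        = (fun y : Fin d → ℝ => (fun i => -((j i : ℝ))) + y) := by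
      funext y; exact add_comm _ _
    rw [this, measure_preimage_add]
    exact hN
  rw [Measure.addHaar_preimage_smul volume (inv_ne_zero hr), h1, mul_zero]

/-- Removing the tail intersections of a sequence of sets with summable measure defects
leaves a null set. -/
lemma aux_tail_null {d : ℕ} (S : Set (Fin d → ℝ)) (T : ℕ → Set (Fin d → ℝ))
    (hT : ∀ j, volume (S \ T j) ≤ ENNReal.ofReal ((2⁻¹:ℝ)^j)) :
    volume (S \ ⋃ k, ⋂ j, T (k + j)) = 0 := by
  have hofReal : ∀ N : ℕ, ENNReal.ofReal ((2⁻¹:ℝ)^N) = (2⁻¹ : ℝ≥0∞)^N := by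
    intro N
    rw [ENNReal.ofReal_pow (by norm_num : (0:ℝ) ≤ 2⁻¹)]
    congr 1
    rw [ENNReal.ofReal_inv_of_pos (by norm_num : (0:ℝ) < 2)]
    norm_num
  refine ENNReal.eq_zero_of_le_mul_pow (ε := 2) (by simp : (2:ℝ≥0∞)⁻¹ < 1) fun k => ?_
  have hsub : S \ (⋃ k', ⋂ j, T (k' + j)) ⊆ ⋃ j, S \ T (k + j) := by
    intro x hx
    have hni : x ∉ ⋂ j, T (k + j) := fun h => hx.2 (Set.mem_iUnion.2 ⟨k, h⟩)
    obtain ⟨j, hj⟩ := not_forall.1 (fun h => hni (Set.mem_iInter.2 h))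
    exact Set.mem_iUnion.2 ⟨j, hx.1, hj⟩
  calc volume (S \ ⋃ k', ⋂ j, T (k' + j)) ≤ volume (⋃ j, S \ T (k + j)) := measure_mono hsub
    _ ≤ ∑' j, volume (S \ T (k + j)) := measure_iUnion_le _
    _ ≤ ∑' j : ℕ, (2⁻¹ : ℝ≥0∞)^(k + j) := by
        refine ENNReal.tsum_le_tsum fun j => ?_
        rw [← hofReal]; exact hT (k + j)
    _ = (2⁻¹ : ℝ≥0∞)^k * (1 - 2⁻¹)⁻¹ := by
        simp only [pow_add, ENNReal.tsum_mul_left, ENNReal.tsum_geometric]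
    _ ≤ ((2:ℝ≥0) : ℝ≥0∞) * (2⁻¹:ℝ≥0∞) ^ k := by
        rw [ENNReal.one_sub_inv_two, inv_inv, mul_comm]
        norm_num

/-- An admissible integrand is Borel measurable on a full-measure product set;
in particular `(x,z) ↦ f(x, ⟨x/ρ_1(ε)⟩, …, ⟨x/ρ_n(ε)⟩, z)` is
(Lebesgue ⊗ Borel)-measurable. -/
theorem statement7
    (d n m : ℕ) (hd : 0 < d) (hn : 0 < n) (hm : 0 < m)
    (Ω : Set (Fin d → ℝ)) (hΩo : IsOpen Ω) (hΩb : Bornology.IsBounded Ω)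
    (ρ : Fin n → ℝ → ℝ) (hρpos : ∀ k e, 0 < e → 0 < ρ k e)
    (hρ0 : ∀ k, Tendsto (ρ k) (𝓝[>] 0) (𝓝 0))
    (f : (Fin d → ℝ) → (Fin n → Fin d → ℝ) → (Fin m → ℝ) → ℝ)
    (hf0 : ∀ x ∈ Ω, ∀ y ∈ unitCellPow d n, ∀ z, 0 ≤ f x y z)
    (hf : AdmissibleIntegrand Ω f) :
    ∃ X ⊆ Ω, ∃ Y ⊆ unitCell d,
      volume (Ω \ X) = 0 ∧ volume (unitCell d \ Y) = 0 ∧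
      Measurable ((X ×ˢ (Set.univ.pi fun _ : Fin n => Y) ×ˢ (Set.univ : Set (Fin m → ℝ))).restrict
        (fun p : (Fin d → ℝ) × (Fin n → Fin d → ℝ) × (Fin m → ℝ) => f p.1 p.2.1 p.2.2)) ∧
      ∀ e : ℝ, 0 < e →
        AEMeasurable
          (fun p : (Fin d → ℝ) × (Fin m → ℝ) =>
            f p.1 (fun k i => Int.fract (p.1 i / ρ k e)) p.2)
          ((volume.restrict Ω).prod volume) := by
  classical
  have hδ : ∀ j : ℕ, (0:ℝ) < (2⁻¹ : ℝ) ^ j := fun j => by positivity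
  choose Xs hXsc hXsΩ hXsm Ys hYsc hYsU hYsm hcont using fun j : ℕ => hf ((2⁻¹:ℝ)^j) (hδ j)
  set X' : ℕ → Set (Fin d → ℝ) := fun k => ⋂ j, Xs (k + j) with hX'def
  set Y' : ℕ → Set (Fin d → ℝ) := fun k => ⋂ j, Ys (k + j) with hY'def
  have hX'mono : Monotone X' := by
    intro a b hab
    refine Set.subset_iInter fun j => ?_
    have h : a + (b - a + j) = b + j := by omega
    exact (Set.iInter_subset _ (b - a + j)).trans (by rw [h])
  have hY'mono : Monotone Y' := by
    intro a b hab
    refine Set.subset_iInter fun j => ?_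
    have h : a + (b - a + j) = b + j := by omega
    exact (Set.iInter_subset _ (b - a + j)).trans (by rw [h])
  have hX'sub : ∀ k, X' k ⊆ Xs k := fun k => by
    simpa using Set.iInter_subset (fun j => Xs (k + j)) 0
  have hY'sub : ∀ k, Y' k ⊆ Ys k := fun k => by
    simpa using Set.iInter_subset (fun j => Ys (k + j)) 0
  set X : Set (Fin d → ℝ) := ⋃ k, X' k with hXdef
  set Y : Set (Fin d → ℝ) := ⋃ k, Y' k with hYdef
  have hXΩ : X ⊆ Ω := Set.iUnion_subset fun k => (hX'sub k).trans (hXsΩ k)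
  have hYU : Y ⊆ unitCell d := Set.iUnion_subset fun k => (hY'sub k).trans (hYsU k)
  have hX0 : volume (Ω \ X) = 0 := aux_tail_null Ω Xs hXsm
  have hY0 : volume (unitCell d \ Y) = 0 := aux_tail_null (unitCell d) Ys hYsm
  -- the product sets
  set F : (Fin d → ℝ) × (Fin n → Fin d → ℝ) × (Fin m → ℝ) → ℝ :=
    fun p => f p.1 p.2.1 p.2.2 with hFdef
  set E : Set ((Fin d → ℝ) × (Fin n → Fin d → ℝ) × (Fin m → ℝ)) :=
    X ×ˢ (Set.univ.pi fun _ : Fin n => Y) ×ˢ (Set.univ : Set (Fin m → ℝ)) with hEdef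
  set Ek : ℕ → Set ((Fin d → ℝ) × (Fin n → Fin d → ℝ) × (Fin m → ℝ)) :=
    fun k => X' k ×ˢ (Set.univ.pi fun _ : Fin n => Y' k) ×ˢ (Set.univ : Set (Fin m → ℝ))
    with hEkdef
  have hEkmono : Monotone Ek := fun a b hab =>
    Set.prod_mono (hX'mono hab)
      (Set.prod_mono (Set.pi_mono fun i _ => hY'mono hab) subset_rfl)
  have hEksubE : ∀ k, Ek k ⊆ E := fun k =>
    Set.prod_mono (Set.subset_iUnion X' k)
      (Set.prod_mono (Set.pi_mono fun i _ => Set.subset_iUnion Y' k) subset_rfl)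
  have hEmem : ∀ p ∈ E, ∃ k, p ∈ Ek k := by
    rintro ⟨x, y, z⟩ ⟨hx, hy, -⟩
    obtain ⟨k0, hk0⟩ := Set.mem_iUnion.1 hx
    choose gI hgI using fun i : Fin n => Set.mem_iUnion.1 (hy i (Set.mem_univ i))
    refine ⟨max k0 (Finset.univ.sup gI), hX'mono (le_max_left _ _) hk0, ?_, Set.mem_univ _⟩
    intro i _
    exact hY'mono ((Finset.le_sup (Finset.mem_univ i)).trans (le_max_right _ _)) (hgI i)
  have hEkmeas : ∀ k, MeasurableSet (Ek k) := fun k =>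
    ((isClosed_iInter fun j => (hXsc (k + j)).isClosed).measurableSet).prod
      (((MeasurableSet.univ_pi fun _ =>
        (isClosed_iInter fun j => (hYsc (k + j)).isClosed).measurableSet)).prod
        MeasurableSet.univ)
  have hcontk : ∀ k, ContinuousOn F (Ek k) := fun k =>
    (hcont k).mono (Set.prod_mono (hX'sub k)
      (Set.prod_mono (Set.pi_mono fun i _ => hY'sub k) subset_rfl))
  -- measurability of the indicator of E
  have hgk : ∀ k, Measurable ((Ek k).indicator F) := fun k =>
    aux_indicator_measurable (hEkmeas k) (hcontk k)
  have hg : Measurable (E.indicator F) := by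
    apply measurable_of_tendsto_metrizable hgk
    rw [tendsto_pi_nhds]
    intro p
    by_cases hp : p ∈ E
    · obtain ⟨K, hK⟩ := hEmem p hp
      rw [Set.indicator_of_mem hp]
      exact tendsto_atTop_of_eventually_const (i₀ := K) fun k hk =>
        Set.indicator_of_mem (hEkmono hk hK) F
    · rw [Set.indicator_of_notMem hp]
      have : ∀ k, (Ek k).indicator F p = 0 := fun k =>
        Set.indicator_of_notMem (fun h => hp (hEksubE k h)) F
      simp only [this]
      exact tendsto_const_nhds
  refine ⟨X, hXΩ, Y, hYU, hX0, hY0, ?_, ?_⟩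
  · -- measurability of the restriction
    have hres : E.restrict F = fun p : E => E.indicator F ↑p :=
      funext fun p => (Set.indicator_of_mem p.2 _).symm
    rw [show (X ×ˢ (Set.univ.pi fun _ : Fin n => Y) ×ˢ (Set.univ : Set (Fin m → ℝ))).restrict
        (fun p : (Fin d → ℝ) × (Fin n → Fin d → ℝ) × (Fin m → ℝ) => f p.1 p.2.1 p.2.2)
        = E.restrict F from rfl, hres]
    exact hg.comp measurable_subtype_coe
  · -- a.e. measurability of the oscillating composition
    intro e he
    set Φ : (Fin d → ℝ) × (Fin m → ℝ) → (Fin d → ℝ) × (Fin n → Fin d → ℝ) × (Fin m → ℝ) :=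
      fun p => (p.1, fun k i => Int.fract (p.1 i / ρ k e), p.2) with hΦdef
    have hΦ : Measurable Φ := by
      refine measurable_fst.prodMk (Measurable.prodMk ?_ measurable_snd)
      refine measurable_pi_lambda _ fun k => measurable_pi_lambda _ fun i => ?_
      exact measurable_fract.comp (((measurable_pi_apply i).comp measurable_fst).div_const _)
    set B : Set (Fin d → ℝ) :=
      {x | x ∈ X ∧ ∀ k : Fin n, (fun i => Int.fract (x i / ρ k e)) ∈ Y} with hBdef
    have hBnull : volume.restrict Ω Bᶜ = 0 := by
      rw [Measure.restrict_apply' hΩo.measurableSet]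
      refine measure_mono_null (fun x hx => ?_)
        (measure_union_null hX0 (measure_iUnion_null fun k : Fin n =>
          aux_fract_preimage_null (ne_of_gt (hρpos k e he)) hY0)
          : volume ((Ω \ X) ∪ ⋃ k : Fin n,
              {x : Fin d → ℝ | (fun i => Int.fract (x i / ρ k e)) ∈ unitCell d \ Y} ) = 0)
      obtain ⟨hxB, hxΩ⟩ := hx
      rw [hBdef, Set.mem_compl_iff, Set.mem_setOf_eq, not_and_or] at hxB
      rcases hxB with h | h
      · exact Or.inl ⟨hxΩ, h⟩
      · obtain ⟨k, hk⟩ := not_forall.1 h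
        refine Or.inr (Set.mem_iUnion.2 ⟨k, ?_, hk⟩)
        intro i _
        exact ⟨Int.fract_nonneg _, Int.fract_lt_one _⟩
    have hae : ∀ᵐ p ∂((volume.restrict Ω).prod (volume : Measure (Fin m → ℝ))),
        p.1 ∈ B := by
      have : {p : (Fin d → ℝ) × (Fin m → ℝ) | ¬ p.1 ∈ B} = Bᶜ ×ˢ Set.univ := by
        ext p; simp [Set.mem_prod]
      rw [ae_iff, this, Measure.prod_prod, hBnull, zero_mul]
    refine AEMeasurable.congr ((hg.comp hΦ).aemeasurable) ?_
    filter_upwards [hae] with p hp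
    have hΦE : Φ p ∈ E := by
      refine ⟨hp.1, ?_, Set.mem_univ _⟩
      intro k _
      exact hp.2 k
    show E.indicator F (Φ p) = f p.1 (fun k i => Int.fract (p.1 i / ρ k e)) p.2
    rw [Set.indicator_of_mem hΦE]
end

section
/- Let f : Ω × □ × ℝ^m → [0,∞) be a function such that (i) for every y ∈ □ the function (x,z) ↦ f(x, y, z) is continuous on Ω × ℝ^m, and (ii) for every x ∈ Ω and z ∈ ℝ^m the function y ↦ f(x, y, z) is Lebesgue measurable on □. Then f is an admissible integrand (with n = 1): for every δ > 0 there exist a compact set X ⊆ Ω with |Ω \ X| ≤ δ and a compact set Y ⊆ □ with |□ \ Y| ≤ δ such that the restriction of f to X × Y × ℝ^m is continuous. -/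
open MeasureTheory Filter Topology

/-!
Fix a compact `X ⊆ Ω` of almost full measure (inner regularity). For a compact set `P` of
`(x, z)`-values, `y ↦ f(·, y, ·)|_P` is a map into the Polish space `C(P, ℝ)`. Restriction to a
countable dense subset of `P` embeds `C(P, ℝ)` measurably into a countable product
(Lusin–Souslin), so this map is measurable as soon as its evaluations are, and Lusin's theorem
makes it continuous on a compact `Y` of almost full measure. Since evaluation
`C(P, ℝ) × P → ℝ` is continuous, `f` is then jointly continuous on `Y × P`. Exhausting
`X × ℝ^m` by countably many compacts and intersecting the corresponding sets `Y`, with summable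
deficits, gives a single `Y` that works for all of `X × ℝ^m`.
-/

open Set

theorem ContinuousMap.aemeasurable_of_aemeasurable_eval {K E : Type*} [TopologicalSpace K]
    [CompactSpace K] [TopologicalSpace.MetrizableSpace K] [MetricSpace E] [CompleteSpace E]
    [SecondCountableTopology E] [MeasurableSpace E] [BorelSpace E]
    [MeasurableSpace C(K, E)] [BorelSpace C(K, E)] {α : Type*} [MeasurableSpace α]
    {μ : Measure α} {F : α → C(K, E)}
    (hF : ∀ a, AEMeasurable (fun y => F y a) μ) : AEMeasurable F μ := by
  obtain ⟨D, hDc, hD⟩ := TopologicalSpace.exists_countable_dense K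
  have : Countable D := hDc.to_subtype
  have hinj : Function.Injective fun (g : C(K, E)) (a : D) => g a := fun g h hgh =>
    ContinuousMap.coe_injective <|
      g.continuous.ext_on hD h.continuous fun a ha => congr_fun hgh ⟨a, ha⟩
  have hrestr : MeasurableEmbedding fun (g : C(K, E)) (a : D) => g a :=
    (continuous_pi fun a : D => continuous_eval_const (a : K)).measurableEmbedding hinj
  exact hrestr.aemeasurable_comp_iff.1 (aemeasurable_pi_lambda _ fun a => hF a)

namespace MeasureTheory

variable {α : Type*} [TopologicalSpace α] [T2Space α] [MeasurableSpace α] {μ : Measure α}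
  {s : Set α}

theorem exists_isCompact_sdiff_le_forall {ι : Type*} [Countable ι] [Nonempty ι]
    {p : ι → Set α → Prop} (hp : ∀ i ⦃K L⦄, L ⊆ K → p i K → p i L)
    (h : ∀ i, ∀ ε ≠ 0, ∃ K ⊆ s, IsCompact K ∧ μ (s \ K) ≤ ε ∧ p i K) :
    ∀ ε ≠ 0, ∃ K ⊆ s, IsCompact K ∧ μ (s \ K) ≤ ε ∧ ∀ i, p i K := by
  intro ε hε
  obtain ⟨ε', hε'0, hε'⟩ := ENNReal.exists_pos_sum_of_countable hε ι
  choose K hKs hK hKμ hpK using fun i => h i (ε' i) (by simpa using (hε'0 i).ne')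
  obtain ⟨i₀⟩ := ‹Nonempty ι›
  refine ⟨⋂ i, K i, (iInter_subset _ i₀).trans (hKs i₀), ?_, ?_,
    fun i => hp i (iInter_subset _ i) (hpK i)⟩
  · exact (hK i₀).of_isClosed_subset (isClosed_iInter fun i => (hK i).isClosed)
      (iInter_subset _ i₀)
  · calc μ (s \ ⋂ i, K i) = μ (⋃ i, s \ K i) := by rw [sdiff_iInter]
      _ ≤ ∑' i, μ (s \ K i) := measure_iUnion_le _
      _ ≤ ∑' i, (ε' i : ENNReal) := ENNReal.tsum_le_tsum hKμ
      _ ≤ ε := hε'.le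

variable [OpensMeasurableSpace α] [μ.InnerRegularCompactLTTop]

theorem SimpleFunc.exists_isCompact_sdiff_le_continuousOn {E : Type*} [TopologicalSpace E]
    (φ : SimpleFunc α E) (hs : MeasurableSet s) (hμs : μ s ≠ ⊤) {ε : ENNReal} (hε : ε ≠ 0) :
    ∃ K ⊆ s, IsCompact K ∧ μ (s \ K) ≤ ε ∧ ContinuousOn φ K := by
  set R := φ.range
  have hfiber : ∀ c : R, ∃ K ⊆ φ ⁻¹' {(c : E)} ∩ s, IsCompact K ∧
      μ ((φ ⁻¹' {(c : E)} ∩ s) \ K) < ε / R.card :=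
    fun c => ((φ.measurableSet_fiber c).inter hs).exists_isCompact_sdiff_lt
      (measure_ne_top_of_subset inter_subset_right hμs)
      (ENNReal.div_pos hε (ENNReal.natCast_ne_top _)).ne'
  choose K hKsub hK hKμ using hfiber
  refine ⟨⋃ c, K c, iUnion_subset fun c => (hKsub c).trans inter_subset_right,
    isCompact_iUnion hK, ?_, ?_⟩
  · have hcover : s \ ⋃ c, K c ⊆ ⋃ c : R, (φ ⁻¹' {(c : E)} ∩ s) \ K c := fun y hy =>
      mem_iUnion.2 ⟨⟨φ y, φ.mem_range_self y⟩, ⟨rfl, hy.1⟩, fun h => hy.2 (mem_iUnion.2 ⟨_, h⟩)⟩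
    calc μ (s \ ⋃ c, K c) ≤ ∑ c : R, μ ((φ ⁻¹' {(c : E)} ∩ s) \ K c) :=
          (measure_mono hcover).trans (measure_iUnion_fintype_le _ _)
      _ ≤ ∑ _c : R, ε / R.card := Finset.sum_le_sum fun c _ => (hKμ c).le
      _ ≤ ε := by simpa using ENNReal.mul_div_le
  · refine (locallyFinite_of_finite K).continuousOn_iUnion (fun c => (hK c).isClosed)
      fun c => continuousOn_const.congr fun y hy => (hKsub c hy).1

theorem StronglyMeasurable.exists_isCompact_sdiff_le_continuousOn {E : Type*} [MetricSpace E]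
    {F : α → E} (hF : StronglyMeasurable F) (hs : MeasurableSet s) (hμs : μ s ≠ ⊤)
    {ε : ENNReal} (hε : ε ≠ 0) :
    ∃ K ⊆ s, IsCompact K ∧ μ (s \ K) ≤ ε ∧ ContinuousOn F K := by
  have hε2 : ε / 2 ≠ 0 := ENNReal.div_ne_zero.2 ⟨hε, ENNReal.ofNat_ne_top⟩
  obtain ⟨η, -, hη, hηε⟩ := ENNReal.lt_iff_exists_real_btwn.1 (pos_iff_ne_zero.2 hε2)
  obtain ⟨t, -, htm, htμ, htu⟩ := tendstoUniformlyOn_of_ae_tendsto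
    (fun n => (hF.approx n).stronglyMeasurable) hF hs hμs
    (Eventually.of_forall fun y _ => hF.tendsto_approx y) (ENNReal.ofReal_pos.1 hη)
  obtain ⟨K, hKs, hK, hKμ, hKc⟩ := exists_isCompact_sdiff_le_forall
    (p := fun n K => ContinuousOn (hF.approx n) K) (fun n _ _ hLK h => h.mono hLK)
    (fun n δ hδ => (hF.approx n).exists_isCompact_sdiff_le_continuousOn (hs.diff htm)
      (measure_ne_top_of_subset sdiff_subset hμs) hδ) (ε / 2) hε2
  refine ⟨K, hKs.trans sdiff_subset, hK, ?_,
    (htu.mono hKs).continuousOn (Frequently.of_forall hKc)⟩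
  calc μ (s \ K) ≤ μ t + μ ((s \ t) \ K) := by
        refine (measure_mono fun y hy => ?_).trans (measure_union_le _ _)
        by_cases hyt : y ∈ t
        exacts [Or.inl hyt, Or.inr ⟨⟨hy.1, hyt⟩, hy.2⟩]
    _ ≤ ε / 2 + ε / 2 := add_le_add (htμ.trans hηε.le) hKμ
    _ = ε := ENNReal.add_halves ε

theorem AEStronglyMeasurable.exists_isCompact_sdiff_le_continuousOn {E : Type*} [MetricSpace E]
    {F : α → E} (hF : AEStronglyMeasurable F (μ.restrict s)) (hs : MeasurableSet s)
    (hμs : μ s ≠ ⊤) {ε : ENNReal} (hε : ε ≠ 0) :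
    ∃ K ⊆ s, IsCompact K ∧ μ (s \ K) ≤ ε ∧ ContinuousOn F K := by
  obtain ⟨N, hFN, hNm, hN⟩ := exists_measurable_superset_of_null (ae_iff.1 hF.ae_eq_mk)
  rw [Measure.restrict_apply hNm] at hN
  obtain ⟨K, hKs, hK, hKμ, hKc⟩ :=
    hF.stronglyMeasurable_mk.exists_isCompact_sdiff_le_continuousOn (hs.diff hNm)
      (measure_ne_top_of_subset sdiff_subset hμs) hε
  refine ⟨K, hKs.trans sdiff_subset, hK, ?_, hKc.congr fun y hy => ?_⟩
  · calc μ (s \ K) ≤ μ (s ∩ N) + μ ((s \ N) \ K) := by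
          refine (measure_mono fun y hy => ?_).trans (measure_union_le _ _)
          by_cases hyN : y ∈ N
          exacts [Or.inl ⟨hy.1, hyN⟩, Or.inr ⟨⟨hy.1, hyN⟩, hy.2⟩]
      _ ≤ ε := by rw [inter_comm, hN, zero_add]; exact hKμ
  · by_contra h
    exact (hKs hy).2 (hFN h)

section CaratheodoryFunction

variable {β E : Type*} [TopologicalSpace β] [TopologicalSpace.MetrizableSpace β]
  [NormedAddCommGroup E] [CompleteSpace E] [SecondCountableTopology E] [MeasurableSpace E]
  [BorelSpace E]

theorem exists_isCompact_sdiff_le_continuousOn_uncurry_of_isCompact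
    {P : Set β} (hP : IsCompact P) {g : α → β → E} (hcont : ∀ y ∈ s, ContinuousOn (g y) P)
    (hmeas : ∀ p ∈ P, AEMeasurable (fun y => g y p) (μ.restrict s))
    (hs : MeasurableSet s) (hμs : μ s ≠ ⊤) {ε : ENNReal} (hε : ε ≠ 0) :
    ∃ Y ⊆ s, IsCompact Y ∧ μ (s \ Y) ≤ ε ∧ ContinuousOn (Function.uncurry g) (Y ×ˢ P) := by
  have : CompactSpace P := isCompact_iff_compactSpace.1 hP
  borelize C(P, E)
  classical
  let G : α → C(P, E) := fun y =>
    if hy : y ∈ s then ⟨P.domRestrict (g y), (hcont y hy).domRestrict⟩ else 0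
  have hGs : ∀ y ∈ s, ∀ p : P, G y p = g y p := fun y hy p => by simp [G, hy, Set.domRestrict]
  have hG : AEMeasurable G (μ.restrict s) :=
    ContinuousMap.aemeasurable_of_aemeasurable_eval fun p => (hmeas p p.2).congr <|
      (ae_restrict_mem hs).mono fun y hy => (hGs y hy p).symm
  obtain ⟨Y, hYs, hY, hYμ, hGY⟩ :=
    hG.aestronglyMeasurable.exists_isCompact_sdiff_le_continuousOn hs hμs hε
  refine ⟨Y, hYs, hY, hYμ, ?_⟩
  rw [continuousOn_iff_continuous_domRestrict]
  have hGY' : Continuous fun q : ↥(Y ×ˢ P) => G q.1.1 ⟨q.1.2, q.2.2⟩ :=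
    continuous_eval.comp <| (hGY.domRestrict.comp (continuous_fst.comp continuous_subtype_val
      |>.subtype_mk fun q => q.2.1)).prodMk
      ((continuous_snd.comp continuous_subtype_val).subtype_mk fun q => q.2.2)
  convert hGY' using 2 with q
  exact (hGs _ (hYs q.2.1) ⟨q.1.2, q.2.2⟩).symm

theorem exists_isCompact_sdiff_le_continuousOn_uncurry [WeaklyLocallyCompactSpace β]
    [SigmaCompactSpace β] {T : Set β} (hT : IsClosed T) {g : α → β → E}
    (hcont : ∀ y ∈ s, ContinuousOn (g y) T)
    (hmeas : ∀ p ∈ T, AEMeasurable (fun y => g y p) (μ.restrict s))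
    (hs : MeasurableSet s) (hμs : μ s ≠ ⊤) {ε : ENNReal} (hε : ε ≠ 0) :
    ∃ Y ⊆ s, IsCompact Y ∧ μ (s \ Y) ≤ ε ∧ ContinuousOn (Function.uncurry g) (Y ×ˢ T) := by
  let K := CompactExhaustion.choice β
  obtain ⟨Y, hYs, hY, hYμ, hgY⟩ := exists_isCompact_sdiff_le_forall
    (p := fun n Y => ContinuousOn (Function.uncurry g) (Y ×ˢ (T ∩ K n)))
    (fun n _ _ hLY h => h.mono (prod_mono hLY subset_rfl))
    (fun n _ hδ => exists_isCompact_sdiff_le_continuousOn_uncurry_of_isCompact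
      ((K.isCompact n).inter_left hT) (fun y hy => (hcont y hy).mono inter_subset_left)
      (fun p hp => hmeas p hp.1) hs hμs hδ) ε hε
  refine ⟨Y, hYs, hY, hYμ, fun q hq => ?_⟩
  obtain ⟨n, hn⟩ := K.exists_mem_nhds q.2
  rw [← continuousWithinAt_inter (prod_mem_nhds univ_mem hn), prod_inter_prod, inter_univ]
  exact hgY n q ⟨hq.1, hq.2, mem_of_mem_nhds hn⟩

end CaratheodoryFunction

end MeasureTheory

theorem measurableSet_unitCell (d : ℕ) : MeasurableSet (unitCell d) :=
  MeasurableSet.univ_pi fun _ => measurableSet_Ico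

theorem volume_unitCell (d : ℕ) : volume (unitCell d) = 1 := by
  simp [unitCell, volume_pi_pi]

theorem statement8_general
    (d m : ℕ)
    (Ω : Set (Fin d → ℝ)) (hΩo : IsOpen Ω) (hΩb : Bornology.IsBounded Ω)
    (f : (Fin d → ℝ) → (Fin d → ℝ) → (Fin m → ℝ) → ℝ)
    (hcont : ∀ y ∈ unitCell d,
      ContinuousOn (fun p : (Fin d → ℝ) × (Fin m → ℝ) => f p.1 y p.2) (Ω ×ˢ Set.univ))
    (hmeas : ∀ x ∈ Ω, ∀ z : Fin m → ℝ,
      AEMeasurable (fun y => f x y z) (volume.restrict (unitCell d))) :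
    ∀ δ > (0 : ℝ), ∃ X : Set (Fin d → ℝ),
      IsCompact X ∧ X ⊆ Ω ∧ volume (Ω \ X) ≤ ENNReal.ofReal δ ∧
      ∃ Y : Set (Fin d → ℝ),
        IsCompact Y ∧ Y ⊆ unitCell d ∧ volume (unitCell d \ Y) ≤ ENNReal.ofReal δ ∧
        ContinuousOn
          (fun p : (Fin d → ℝ) × (Fin d → ℝ) × (Fin m → ℝ) => f p.1 p.2.1 p.2.2)
          (X ×ˢ Y ×ˢ Set.univ) := by
  intro δ hδ
  have hδ' : ENNReal.ofReal δ ≠ 0 := (ENNReal.ofReal_pos.2 hδ).ne'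
  obtain ⟨X, hXΩ, hX, hXμ⟩ :=
    hΩo.measurableSet.exists_isCompact_sdiff_lt (hΩb.measure_lt_top (μ := volume)).ne hδ'
  obtain ⟨Y, hYs, hY, hYμ, hfY⟩ := exists_isCompact_sdiff_le_continuousOn_uncurry
    (g := fun y p => f p.1 y p.2) (hX.isClosed.prod isClosed_univ)
    (fun y hy => (hcont y hy).mono (prod_mono hXΩ subset_rfl))
    (fun p hp => hmeas p.1 (hXΩ hp.1) p.2) (measurableSet_unitCell d)
    (by simp [volume_unitCell]) hδ'
  refine ⟨X, hX, hXΩ, hXμ.le, Y, hY, hYs, hYμ, ?_⟩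
  exact hfY.comp
    (f := fun p : (Fin d → ℝ) × (Fin d → ℝ) × (Fin m → ℝ) => (p.2.1, (p.1, p.2.2)))
    (by fun_prop) fun p hp => ⟨hp.2.1, hp.1, hp.2.2⟩

/-- A nonnegative function `f(x,y,z)` on `Ω × □ × ℝ^m` that is continuous in `(x,z)`
for every `y` and Lebesgue measurable in `y` for every `(x,z)` is an admissible
integrand (case `n = 1`). -/
theorem statement8
    (d m : ℕ) (hd : 0 < d) (hm : 0 < m)
    (Ω : Set (Fin d → ℝ)) (hΩo : IsOpen Ω) (hΩb : Bornology.IsBounded Ω)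
    (f : (Fin d → ℝ) → (Fin d → ℝ) → (Fin m → ℝ) → ℝ)
    (hf0 : ∀ x ∈ Ω, ∀ y ∈ unitCell d, ∀ z, 0 ≤ f x y z)
    (hcont : ∀ y ∈ unitCell d,
      ContinuousOn (fun p : (Fin d → ℝ) × (Fin m → ℝ) => f p.1 y p.2) (Ω ×ˢ Set.univ))
    (hmeas : ∀ x ∈ Ω, ∀ z : Fin m → ℝ,
      AEMeasurable (fun y => f x y z) (volume.restrict (unitCell d))) :
    ∀ δ > (0 : ℝ), ∃ X : Set (Fin d → ℝ),
      IsCompact X ∧ X ⊆ Ω ∧ volume (Ω \ X) ≤ ENNReal.ofReal δ ∧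
      ∃ Y : Set (Fin d → ℝ),
        IsCompact Y ∧ Y ⊆ unitCell d ∧ volume (unitCell d \ Y) ≤ ENNReal.ofReal δ ∧
        ContinuousOn
          (fun p : (Fin d → ℝ) × (Fin d → ℝ) × (Fin m → ℝ) => f p.1 p.2.1 p.2.2)
          (X ×ˢ Y ×ˢ Set.univ) :=
  statement8_general d m Ω hΩo hΩb f hcont hmeas
end

section
/- Let p ∈ (1, +∞), b, c > 0, and let f : ℝ^d → ℝ be a convex function such that |f(z)| ≤ c(b + |z|)^p for every z ∈ ℝ^d. Then for all z₁, z₂ ∈ ℝ^d one has |f(z₁) − f(z₂)| ≤ c·d·(1 + 2^p)·(b + |z₁| + |z₂|)^{p−1}·|z₁ − z₂|. -/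
open scoped RealInnerProductSpace

lemma statement11_aux
    (d : ℕ) (p : ℝ) (hp : 1 < p) (b c : ℝ) (hb : 0 < b) (hc : 0 < c)
    (f : EuclideanSpace ℝ (Fin d) → ℝ) (hconv : ConvexOn ℝ Set.univ f)
    (hgrowth : ∀ z : EuclideanSpace ℝ (Fin d), |f z| ≤ c * (b + ‖z‖) ^ p)
    (z₁ z₂ : EuclideanSpace ℝ (Fin d)) (hne : z₁ ≠ z₂) :
    f z₁ - f z₂ ≤ c * (1 + (2 : ℝ) ^ p) * (b + ‖z₁‖ + ‖z₂‖) ^ (p - 1) * ‖z₁ - z₂‖ := by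
  set r : ℝ := ‖z₁ - z₂‖ with hrdef
  have hr : 0 < r := by
    rw [hrdef]
    exact norm_sub_pos_iff.mpr hne
  set M : ℝ := b + ‖z₁‖ + ‖z₂‖ with hMdef
  have hM : 0 < M := by positivity
  set z₃ : EuclideanSpace ℝ (Fin d) := z₁ + (M / r) • (z₁ - z₂) with hz₃
  set t : ℝ := r / (r + M) with htdef
  have ht0 : 0 < t := by positivity
  have ht1 : t < 1 := by
    rw [htdef, div_lt_one (by positivity)]
    linarith
  have hcomb : (1 - t) • z₂ + t • z₃ = z₁ := by
    rw [hz₃, htdef]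
    match_scalars <;> field_simp <;> ring
  have hcv := hconv.2 (Set.mem_univ z₂) (Set.mem_univ z₃)
    (by linarith : (0:ℝ) ≤ 1 - t) ht0.le (by ring)
  rw [hcomb] at hcv
  simp only [smul_eq_mul] at hcv
  have hz₃norm : ‖z₃‖ ≤ ‖z₁‖ + M := by
    have h1 : ‖(M / r) • (z₁ - z₂)‖ = M := by
      rw [norm_smul, Real.norm_eq_abs, abs_of_pos (by positivity), ← hrdef]
      field_simp
    calc ‖z₃‖ ≤ ‖z₁‖ + ‖(M / r) • (z₁ - z₂)‖ := norm_add_le _ _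
      _ = ‖z₁‖ + M := by rw [h1]
  have hppos : (0:ℝ) ≤ p := by linarith
  have hf3 : f z₃ ≤ c * ((2:ℝ) ^ p * M ^ p) := by
    have h1 : f z₃ ≤ c * (b + ‖z₃‖) ^ p := (le_abs_self _).trans (hgrowth z₃)
    have h2 : (b + ‖z₃‖ : ℝ) ^ p ≤ (2 * M) ^ p := by
      apply Real.rpow_le_rpow (by positivity) _ hppos
      have : b + ‖z₁‖ ≤ M := by rw [hMdef]; linarith [norm_nonneg z₂]
      linarith
    have h3 : ((2:ℝ) * M) ^ p = 2 ^ p * M ^ p :=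
      Real.mul_rpow (by norm_num) hM.le
    calc f z₃ ≤ c * (b + ‖z₃‖) ^ p := h1
      _ ≤ c * (2 * M) ^ p := by nlinarith
      _ = c * (2 ^ p * M ^ p) := by rw [h3]
  have hf2 : -f z₂ ≤ c * M ^ p := by
    have h1 : -f z₂ ≤ c * (b + ‖z₂‖) ^ p := (neg_le_abs _).trans (hgrowth z₂)
    have h2 : (b + ‖z₂‖ : ℝ) ^ p ≤ M ^ p := by
      apply Real.rpow_le_rpow (by positivity) _ hppos
      rw [hMdef]; linarith [norm_nonneg z₁]
    nlinarith
  have hstep : f z₁ - f z₂ ≤ t * (f z₃ - f z₂) := by nlinarith [hcv]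
  have hstep2 : t * (f z₃ - f z₂) ≤ t * (c * (2 ^ p * M ^ p) + c * M ^ p) :=
    mul_le_mul_of_nonneg_left (by linarith) ht0.le
  have htle : t ≤ r / M := by
    rw [htdef, div_le_div_iff₀ (by positivity) hM]
    nlinarith
  have hrhs0 : (0:ℝ) ≤ c * (2 ^ p * M ^ p) + c * M ^ p := by positivity
  have hstep3 : t * (c * (2 ^ p * M ^ p) + c * M ^ p)
      ≤ (r / M) * (c * (2 ^ p * M ^ p) + c * M ^ p) :=
    mul_le_mul_of_nonneg_right htle hrhs0
  have hMp : M ^ p = M ^ (p - 1) * M := by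
    rw [← Real.rpow_add_one hM.ne' (p - 1)]
    ring_nf
  have hfin : (r / M) * (c * (2 ^ p * M ^ p) + c * M ^ p)
      = c * (1 + (2:ℝ) ^ p) * M ^ (p - 1) * r := by
    rw [hMp]
    field_simp
    ring
  calc f z₁ - f z₂ ≤ t * (f z₃ - f z₂) := hstep
    _ ≤ t * (c * (2 ^ p * M ^ p) + c * M ^ p) := hstep2
    _ ≤ (r / M) * (c * (2 ^ p * M ^ p) + c * M ^ p) := hstep3
    _ = c * (1 + (2:ℝ) ^ p) * M ^ (p - 1) * r := hfin

/-- A convex function on `ℝ^d` with `|f(z)| ≤ c (b + |z|)^p` is locally Lipschitz with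
the explicit estimate `|f(z₁) − f(z₂)| ≤ c d (1 + 2^p)(b + |z₁| + |z₂|)^{p−1} |z₁ − z₂|`. -/
theorem statement11
    (d : ℕ) (hd : 0 < d) (p : ℝ) (hp : 1 < p) (b c : ℝ) (hb : 0 < b) (hc : 0 < c)
    (f : EuclideanSpace ℝ (Fin d) → ℝ) (hconv : ConvexOn ℝ Set.univ f)
    (hgrowth : ∀ z : EuclideanSpace ℝ (Fin d), |f z| ≤ c * (b + ‖z‖) ^ p) :
    ∀ z₁ z₂ : EuclideanSpace ℝ (Fin d),
      |f z₁ - f z₂| ≤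
        c * d * (1 + (2 : ℝ) ^ p) * (b + ‖z₁‖ + ‖z₂‖) ^ (p - 1) * ‖z₁ - z₂‖ := by
  intro z₁ z₂
  by_cases h : z₁ = z₂
  · subst h
    simp
  · have k1 := statement11_aux d p hp b c hb hc f hconv hgrowth z₁ z₂ h
    have k2 := statement11_aux d p hp b c hb hc f hconv hgrowth z₂ z₁ (Ne.symm h)
    rw [norm_sub_rev z₂ z₁, show b + ‖z₂‖ + ‖z₁‖ = b + ‖z₁‖ + ‖z₂‖ by ring] at k2
    have habs : |f z₁ - f z₂|
        ≤ c * (1 + (2:ℝ) ^ p) * (b + ‖z₁‖ + ‖z₂‖) ^ (p - 1) * ‖z₁ - z₂‖ := by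
      rw [abs_sub_le_iff]
      exact ⟨k1, k2⟩
    have hd1 : (1:ℝ) ≤ (d:ℝ) := by exact_mod_cast hd
    have hA : (0:ℝ) ≤ c * (1 + (2:ℝ) ^ p) * (b + ‖z₁‖ + ‖z₂‖) ^ (p - 1) * ‖z₁ - z₂‖ := by
      positivity
    nlinarith [habs, hA, hd1]
end

section
/- Let Λ be a nonempty family of nonnegative Lebesgue-integrable functions on Ω that is inf-stable, and suppose that for every δ > 0 there exists a compact set X_δ ⊆ Ω with |Ω \ X_δ| ≤ δ such that the restriction λ|_{X_δ} is continuous for every λ ∈ Λ. Then the pointwise infimum x ↦ inf_{λ∈Λ} λ(x) is Lebesgue measurable on Ω and inf_{λ∈Λ} ∫_Ω λ(x) dx = ∫_Ω inf_{λ∈Λ} λ(x) dx. -/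
/-!
On a compact set `X ⊆ Ω` on which every `λ ∈ Λ` is continuous, the functions of `Λ` are upper
semicontinuous on a second-countable space, so their infimum `g` is already the infimum of a
countable subfamily `λ₀, λ₁, …`. This gives the measurability of `g`, and by dominated convergence
`∫_X min(λ₀, …, λ_K)` is close to `∫_X g` for large `K`. Each point of `X` has a neighbourhood on
which one of `λ₀, …, λ_K` is within `ε` of this minimum; a partition of unity subordinate to
these neighbourhoods and to `Xᶜ` (where a fixed member of `Λ` is used) and inf-stability give a
member of `Λ` lying below `min(λ₀, …, λ_K) + ε` on `X`. Off `X` its integral is small by absolute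
continuity of the integral, since the sets `X_δ` exhaust `Ω` up to sets of small measure.
-/

open MeasureTheory Filter Topology Set
open scoped Manifold ENNReal

theorem exists_ne_zero_le_of_le_sum_mul {ι : Type*} [Fintype ι] {w a : ι → ℝ} {c : ℝ}
    (hw : ∀ i, 0 ≤ w i) (hw1 : ∑ i, w i = 1) (hc : c ≤ ∑ i, w i * a i) :
    ∃ i, w i ≠ 0 ∧ c ≤ a i := by
  by_contra! H
  obtain ⟨i, -, hi⟩ := Finset.exists_ne_zero_of_sum_ne_zero (hw1.trans_ne one_ne_zero)
  have hlt : ∑ i, w i * a i < ∑ i, w i * c :=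
    Finset.sum_lt_sum (fun j _ => ?_) ⟨i, Finset.mem_univ _, ?_⟩
  · rw [← Finset.sum_mul, hw1, one_mul] at hlt
    exact hlt.not_ge hc
  · rcases eq_or_ne (w j) 0 with hj | hj
    · simp [hj]
    · exact mul_le_mul_of_nonneg_left (H j hj).le (hw j)
  · exact mul_lt_mul_of_pos_left (H i hi) ((hw i).lt_of_ne' hi)

theorem tendsto_inf'_range_of_isGLB {a : ℕ → ℝ} {b : ℝ} (h : IsGLB (range a) b) :
    Tendsto (fun K => (Finset.range (K + 1)).inf' Finset.nonempty_range_add_one a) atTop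
      (𝓝 b) := by
  refine tendsto_order.2 ⟨fun c hc => .of_forall fun K => hc.trans_le ?_, fun c hc => ?_⟩
  · exact Finset.le_inf' _ _ fun k _ => h.1 (mem_range_self k)
  · obtain ⟨_, ⟨k, rfl⟩, hk⟩ := (isGLB_lt_iff h).1 hc
    filter_upwards [eventually_ge_atTop k] with K hK
    exact (Finset.inf'_le _ (Finset.mem_range.2 (Nat.lt_succ_of_le hK))).trans_lt hk

theorem MeasureTheory.Integrable.exists_pos_forall_measure_lt_setIntegral_lt {α : Type*}
    [MeasurableSpace α] {μ : Measure α} {f : α → ℝ} (hf : Integrable f μ) {ε : ℝ}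
    (hε : 0 < ε) :
    ∃ δ > 0, ∀ s, μ s < δ → ∫ x in s, f x ∂μ < ε := by
  have h := (hf.tendsto_setIntegral_nhds_zero (s := id) (tendsto_comap (f := ⇑μ))).eventually
    (gt_mem_nhds hε)
  obtain ⟨δ, hδ, h⟩ := (ENNReal.nhds_zero_basis.comap _).eventually_iff.1 h
  exact ⟨δ, hδ, fun s hs => h hs⟩

theorem bddBelow_range_apply_of_nonneg {α : Type*} {Ω : Set α} {Λ : Set (α → ℝ)}
    (hpos : ∀ l ∈ Λ, ∀ x ∈ Ω, 0 ≤ l x) {x : α} (hx : x ∈ Ω) :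
    BddBelow (range fun l : Λ => l.1 x) :=
  ⟨0, by rintro _ ⟨l, rfl⟩; exact hpos l l.2 x hx⟩

theorem exists_seq_isGLB_of_continuousOn {α : Type*} [TopologicalSpace α]
    [SecondCountableTopology α] {Λ : Set (α → ℝ)} (hne : Λ.Nonempty) {X : Set α}
    (hcont : ∀ l ∈ Λ, ContinuousOn l X)
    (hbdd : ∀ x ∈ X, BddBelow (range fun l : Λ => l.1 x)) :
    ∃ L : ℕ → α → ℝ, (∀ k, L k ∈ Λ) ∧
      ∀ x ∈ X, IsGLB (range fun k => L k x) (⨅ l : Λ, l.1 x) := by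
  have := hne.to_subtype
  obtain ⟨l₀, hl₀⟩ := hne
  have hGLB : IsGLB (X.domRestrict '' Λ) (X.domRestrict fun x => ⨅ l : Λ, l.1 x) := by
    refine isGLB_pi.2 fun x => ?_
    rw [image_image, image_eq_range]
    exact isGLB_ciInf (hbdd x x.2)
  obtain ⟨𝓕, h𝓕Λ, h𝓕c, h𝓕⟩ := exists_countable_upperSemicontinuous_isGLB
    (by rintro _ ⟨l, hl, rfl⟩; exact (hcont l hl).domRestrict.upperSemicontinuous) hGLB
  -- adding `l₀` keeps the infimum and makes the family nonempty, so that `ℕ` enumerates it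
  have hins := h𝓕.insert (X.domRestrict l₀)
  rw [inf_eq_right.2 (hGLB.1 (mem_image_of_mem _ hl₀))] at hins
  obtain ⟨f, hf⟩ := (h𝓕c.insert _).exists_eq_range (insert_nonempty _ _)
  have : ∀ k, ∃ l ∈ Λ, X.domRestrict l = f k := fun k =>
    (insert_subset (mem_image_of_mem _ hl₀) h𝓕Λ) (hf ▸ mem_range_self k)
  choose L hLΛ hLf using this
  refine ⟨L, hLΛ, fun x hx => ?_⟩
  have := isGLB_pi.1 (hf ▸ hins) ⟨x, hx⟩
  rwa [← range_comp, ← funext hLf] at this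

section Measurability

variable {α : Type*} [TopologicalSpace α] [SecondCountableTopology α] [MeasurableSpace α]
  [OpensMeasurableSpace α] {μ : Measure α} {Λ : Set (α → ℝ)}

theorem aemeasurable_restrict_iInf_of_continuousOn (hne : Λ.Nonempty) {X : Set α}
    (hX : MeasurableSet X) (hcont : ∀ l ∈ Λ, ContinuousOn l X)
    (hbdd : ∀ x ∈ X, BddBelow (range fun l : Λ => l.1 x)) :
    AEMeasurable (fun x => ⨅ l : Λ, l.1 x) (μ.restrict X) := by
  obtain ⟨L, hLΛ, hL⟩ := exists_seq_isGLB_of_continuousOn hne hcont hbdd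
  refine (AEMeasurable.iInf fun k => (hcont _ (hLΛ k)).aemeasurable hX).congr ?_
  exact ae_restrict_of_forall_mem hX fun x hx => (hL x hx).ciInf_eq

theorem aemeasurable_restrict_iInf_of_tendsto_measure_sdiff (hne : Λ.Nonempty) {Ω : Set α}
    (hpos : ∀ l ∈ Λ, ∀ x ∈ Ω, 0 ≤ l x) {X : ℕ → Set α} (hX : ∀ n, MeasurableSet (X n))
    (hXΩ : ∀ n, X n ⊆ Ω) (hΩX : Tendsto (fun n => μ (Ω \ X n)) atTop (𝓝 0))
    (hcont : ∀ n, ∀ l ∈ Λ, ContinuousOn l (X n)) :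
    AEMeasurable (fun x => ⨅ l : Λ, l.1 x) (μ.restrict Ω) := by
  have hnull : μ (Ω \ ⋃ n, X n) = 0 := nonpos_iff_eq_zero.1 <|
    ge_of_tendsto' hΩX fun n => measure_mono (sdiff_subset_sdiff_right (subset_iUnion X n))
  have hae : Ω =ᵐ[μ] ⋃ n, X n :=
    ae_eq_set.2 ⟨hnull, by rw [sdiff_eq_empty.2 (iUnion_subset hXΩ), measure_empty]⟩
  rw [Measure.restrict_congr_set hae, aemeasurable_iUnion_iff]
  exact fun n => aemeasurable_restrict_iInf_of_continuousOn hne (hX n) (hcont n)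
    fun x hx => bddBelow_range_apply_of_nonneg hpos (hXΩ n hx)

end Measurability

theorem tendsto_setIntegral_inf'_range_of_isGLB {α : Type*} [TopologicalSpace α] [T2Space α]
    [MeasurableSpace α] [OpensMeasurableSpace α] {μ : Measure α} [IsFiniteMeasureOnCompacts μ]
    {X : Set α} (hX : IsCompact X) {L : ℕ → α → ℝ} (hL : ∀ k, ContinuousOn (L k) X) {g : α → ℝ}
    (hg : ∀ x ∈ X, IsGLB (range (L · x)) (g x)) (hg0 : ∀ x ∈ X, 0 ≤ g x) :
    Tendsto
      (fun K => ∫ x in X, (Finset.range (K + 1)).inf' Finset.nonempty_range_add_one (L · x) ∂μ)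
      atTop (𝓝 (∫ x in X, g x ∂μ)) := by
  refine tendsto_integral_of_dominated_convergence (L 0)
    (fun K => (ContinuousOn.finset_inf'_apply _ fun k _ => hL k).aestronglyMeasurable
      hX.measurableSet) ((hL 0).integrableOn_compact hX) (fun K => ?_)
    (ae_restrict_of_forall_mem hX.measurableSet fun x hx =>
      tendsto_inf'_range_of_isGLB (hg x hx))
  refine ae_restrict_of_forall_mem hX.measurableSet fun x hx => ?_
  have hle := Finset.inf'_le (L · x) (Finset.mem_range.2 K.succ_pos)
  have hge : g x ≤ (Finset.range (K + 1)).inf' Finset.nonempty_range_add_one (L · x) :=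
    Finset.le_inf' _ _ fun k _ => (hg x hx).1 (mem_range_self k)
  rw [Real.norm_eq_abs, abs_le]
  constructor <;> linarith [hg0 x hx]

section InfStable

variable {E : Type*} [NormedAddCommGroup E] [NormedSpace ℝ E]

def InfStable (Ω : Set E) (Λ : Set (E → ℝ)) : Prop :=
  ∀ N : ℕ, 0 < N → ∀ lam : Fin N → E → ℝ, (∀ j, lam j ∈ Λ) →
    ∀ φ : Fin N → E → ℝ, (∀ j, ContDiffOn ℝ 1 (φ j) (closure Ω)) →
      (∀ j, ∀ x ∈ closure Ω, φ j x ∈ Set.Icc (0 : ℝ) 1) →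
      (∀ x ∈ closure Ω, ∑ j, φ j x = 1) → ∃ l ∈ Λ, ∀ x ∈ Ω, l x ≤ ∑ j, φ j x * lam j x

variable [FiniteDimensional ℝ E] {Ω : Set E} {Λ : Set (E → ℝ)}

theorem InfStable.exists_forall_exists_mem_le (hΛ : InfStable Ω Λ) {ι : Type*} [Fintype ι]
    [Nonempty ι] {C : ι → Set E} (hC : ∀ i, IsOpen (C i)) (hΩC : closure Ω ⊆ ⋃ i, C i)
    {lam : ι → E → ℝ} (hlam : ∀ i, lam i ∈ Λ) :
    ∃ l ∈ Λ, ∀ x ∈ Ω, ∃ i, x ∈ C i ∧ l x ≤ lam i x := by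
  obtain ⟨φ, hφ⟩ :=
    SmoothPartitionOfUnity.exists_isSubordinate 𝓘(ℝ, E) isClosed_closure C hC hΩC
  have hsum (x) (hx : x ∈ closure Ω) : ∑ i, φ i x = 1 := by
    rw [← finsum_eq_sum_of_fintype]; exact φ.sum_eq_one hx
  let e := (Fintype.equivFin ι).symm
  obtain ⟨l, hl, hle⟩ := hΛ _ Fintype.card_pos (lam ∘ e) (fun j => hlam (e j))
    (fun j => φ (e j))
    (fun j => ((contMDiff_iff_contDiff.1 (φ (e j)).contMDiff).of_le
      (by exact_mod_cast le_top)).contDiffOn)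
    (fun j x _ => ⟨φ.nonneg _ x, φ.le_one _ x⟩)
    (fun x hx => (e.sum_comp (φ · x)).trans (hsum x hx))
  refine ⟨l, hl, fun x hx => ?_⟩
  obtain ⟨i, hi, hli⟩ := exists_ne_zero_le_of_le_sum_mul (fun i => φ.nonneg i x)
    (hsum x (subset_closure hx)) ((hle x hx).trans_eq (e.sum_comp fun i => φ i x * lam i x))
  exact ⟨i, hφ i (subset_tsupport _ hi), hli⟩

theorem InfStable.exists_lt_inf'_add_of_isClosed (hΛ : InfStable Ω Λ)
    (hpos : ∀ l ∈ Λ, ∀ x ∈ Ω, 0 ≤ l x) {X W : Set E} (hX : IsClosed X) (hXΩ : X ⊆ Ω)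
    (hW : IsOpen W) (hXW : X ⊆ W) {l₀ : E → ℝ} (hl₀ : l₀ ∈ Λ)
    {ι : Type*} {s : Finset ι} (hs : s.Nonempty) {L : ι → E → ℝ} (hL : ∀ i ∈ s, L i ∈ Λ)
    (hLX : ∀ i ∈ s, ContinuousOn (L i) X) {ε : ℝ} (hε : 0 < ε) :
    ∃ l ∈ Λ, (∀ x ∈ X, l x < s.inf' hs (L · x) + ε) ∧
      ∀ x ∈ Ω \ X, l x ≤ l₀ x + W.indicator (∑ i ∈ s, L i) x := by
  have hV (i : s) :
      ∃ V, IsOpen V ∧ (fun x => L i x - s.inf' hs (L · x)) ⁻¹' Iio ε ∩ X = V ∩ X :=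
    continuousOn_iff'.1 ((hLX i i.2).sub (.finset_inf'_apply hs hLX)) _ isOpen_Iio
  choose V hVo hVX using hV
  have hmin (x : E) : ∃ i : s, L i x = s.inf' hs (L · x) := by
    obtain ⟨i, hi, h⟩ := s.exists_mem_eq_inf' hs (L · x)
    exact ⟨⟨i, hi⟩, h.symm⟩
  -- `l₀` is used on `Xᶜ`, and `L i` near the points of `X` where it is `ε`-close to the minimum
  let C : Option s → Set E := fun o => o.elim Xᶜ (V · ∩ W)
  let lam : Option s → E → ℝ := fun o => o.elim l₀ (L ·)
  have hcover : closure Ω ⊆ ⋃ o, C o := by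
    intro x _
    by_cases hx : x ∈ X
    · obtain ⟨i, hi⟩ := hmin x
      have : x ∈ V i ∩ X := hVX i ▸ ⟨by simp [hi, hε], hx⟩
      exact mem_iUnion.2 ⟨some i, this.1, hXW hx⟩
    · exact mem_iUnion.2 ⟨none, hx⟩
  obtain ⟨l, hl, hle⟩ := hΛ.exists_forall_exists_mem_le (C := C) (lam := lam)
    (fun o => o.casesOn hX.isOpen_compl fun i => (hVo i).inter hW) hcover
    (fun o => o.casesOn hl₀ fun i => hL i i.2)
  refine ⟨l, hl, fun x hx => ?_, fun x hx => ?_⟩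
  · obtain ⟨_ | i, hxi, hlx⟩ := hle x (hXΩ hx)
    · exact absurd hx hxi
    · have : x ∈ V i ∩ X := ⟨hxi.1, hx⟩
      rw [← hVX i] at this
      have hlt : L i x - s.inf' hs (L · x) < ε := this.1
      have hlx : l x ≤ L i x := hlx
      linarith
  · have hsum : 0 ≤ ∑ i ∈ s, L i x := s.sum_nonneg fun i hi => hpos _ (hL i hi) x hx.1
    obtain ⟨_ | i, hxi, hlx⟩ := hle x hx.1
    · have : 0 ≤ W.indicator (∑ i ∈ s, L i) x :=
        indicator_apply_nonneg fun _ => by simpa using hsum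
      exact le_add_of_le_of_nonneg hlx this
    · have hlx : l x ≤ L i x := hlx
      have := s.single_le_sum (fun j hj => hpos _ (hL j hj) x hx.1) i.2
      rw [indicator_of_mem hxi.2, Finset.sum_apply]
      linarith [hpos l₀ hl₀ x hx.1]

variable [MeasurableSpace E] [OpensMeasurableSpace E] {μ : Measure E}
  [μ.OuterRegular] [IsFiniteMeasureOnCompacts μ]

theorem InfStable.exists_setIntegral_le_of_isCompact (hΛ : InfStable Ω Λ)
    (hΩ : MeasurableSet Ω) (hint : ∀ l ∈ Λ, IntegrableOn l Ω μ)
    (hpos : ∀ l ∈ Λ, ∀ x ∈ Ω, 0 ≤ l x) {X : Set E} (hX : IsCompact X) (hXΩ : X ⊆ Ω)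
    (hcont : ∀ l ∈ Λ, ContinuousOn l X) {l₀ : E → ℝ} (hl₀ : l₀ ∈ Λ) {ε : ℝ} (hε : 0 < ε) :
    ∃ l ∈ Λ, ∫ x in Ω, l x ∂μ ≤
      ∫ x in X, (⨅ l : Λ, l.1 x) ∂μ + ∫ x in Ω \ X, l₀ x ∂μ + (2 + μ.real X) * ε := by
  obtain ⟨L, hLΛ, hLX⟩ := exists_seq_isGLB_of_continuousOn ⟨l₀, hl₀⟩ hcont
    fun x hx => bddBelow_range_apply_of_nonneg hpos (hXΩ hx)
  have hLc (k : ℕ) : ContinuousOn (L k) X := hcont _ (hLΛ k)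
  let m (K : ℕ) (x : E) : ℝ :=
    (Finset.range (K + 1)).inf' Finset.nonempty_range_add_one (L · x)
  obtain ⟨K, hK⟩ := ((tendsto_setIntegral_inf'_range_of_isGLB (μ := μ) hX hLc hLX
    fun x hx => Real.iInf_nonneg fun l => hpos l l.2 x (hXΩ hx)).eventually
    (gt_mem_nhds (lt_add_of_pos_right _ hε))).exists
  let Φ := ∑ k ∈ Finset.range (K + 1), L k
  have hΦ : IntegrableOn Φ Ω μ := integrable_finsetSum' _ fun k _ => hint _ (hLΛ k)
  obtain ⟨δ, hδ, hΦδ⟩ := hΦ.exists_pos_forall_measure_lt_setIntegral_lt hε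
  -- the partition of unity may use the `L k` on `W \ X`, which has small measure
  obtain ⟨W, hXW, hW, hWδ⟩ := X.exists_isOpen_lt_add (hX.measure_lt_top (μ := μ)).ne hδ.ne'
  obtain ⟨l, hl, hlX, hlΩX⟩ := hΛ.exists_lt_inf'_add_of_isClosed hpos hX.isClosed hXΩ hW hXW
    hl₀ (s := Finset.range (K + 1)) Finset.nonempty_range_add_one (fun k _ => hLΛ k)
    (fun k _ => hLc k) hε
  refine ⟨l, hl, ?_⟩
  have hWX : ∫ x in Ω \ X, W.indicator Φ x ∂μ < ε := by
    have := hΦδ (W \ X) ((Measure.restrict_apply_le _ _).trans_lt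
      (measure_sdiff_lt_of_lt_add hX.measurableSet.nullMeasurableSet hXW
        hX.measure_lt_top.ne hWδ))
    rw [Measure.restrict_restrict (hW.measurableSet.diff hX.measurableSet)] at this
    rw [setIntegral_indicator hW.measurableSet]
    convert this using 3
    ext x
    simp only [mem_inter_iff, Set.mem_sdiff]
    tauto
  have hmK : IntegrableOn (m K) X μ :=
    (ContinuousOn.finset_inf'_apply _ fun k _ => hLc k).integrableOn_compact hX
  have hε' : IntegrableOn (fun _ => ε) X μ := continuousOn_const.integrableOn_compact hX
  have hXpart : ∫ x in X, l x ∂μ ≤ ∫ x in X, m K x ∂μ + μ.real X * ε := by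
    calc ∫ x in X, l x ∂μ ≤ ∫ x in X, (m K x + ε) ∂μ :=
          setIntegral_mono_on ((hint l hl).mono_set hXΩ) (hmK.add hε') hX.measurableSet
            fun x hx => (hlX x hx).le
      _ = _ := by rw [integral_add hmK hε', setIntegral_const, smul_eq_mul]
  have hrest : ∫ x in Ω \ X, l x ∂μ ≤
      ∫ x in Ω \ X, l₀ x ∂μ + ∫ x in Ω \ X, W.indicator Φ x ∂μ := by
    have hl₀' := (hint l₀ hl₀).mono_set (sdiff_subset (t := X))
    have hΦ' := (hΦ.indicator hW.measurableSet).mono_set (sdiff_subset (t := X))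
    exact (setIntegral_mono_on ((hint l hl).mono_set sdiff_subset) (hl₀'.add hΦ')
      (hΩ.diff hX.measurableSet) hlΩX).trans_eq (integral_add hl₀' hΦ')
  rw [← integral_inter_add_sdiff hX.measurableSet (hint l hl), inter_eq_right.2 hXΩ]
  linarith

theorem InfStable.iInf_setIntegral_le (hΛ : InfStable Ω Λ) (hΩ : MeasurableSet Ω)
    (hμΩ : μ Ω ≠ ∞) (hne : Λ.Nonempty) (hint : ∀ l ∈ Λ, IntegrableOn l Ω μ)
    (hpos : ∀ l ∈ Λ, ∀ x ∈ Ω, 0 ≤ l x) (hg : IntegrableOn (fun x => ⨅ l : Λ, l.1 x) Ω μ)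
    {X : ℕ → Set E} (hX : ∀ n, IsCompact (X n)) (hXΩ : ∀ n, X n ⊆ Ω)
    (hΩX : Tendsto (fun n => μ (Ω \ X n)) atTop (𝓝 0))
    (hcont : ∀ n, ∀ l ∈ Λ, ContinuousOn l (X n)) :
    ⨅ l : Λ, ∫ x in Ω, l.1 x ∂μ ≤ ∫ x in Ω, ⨅ l : Λ, l.1 x ∂μ := by
  obtain ⟨l₀, hl₀⟩ := hne
  have hC : 0 < 3 + μ.real Ω := by positivity
  refine le_of_forall_pos_le_add fun ε hε => ?_
  have hε' : 0 < ε / (3 + μ.real Ω) := div_pos hε hC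
  have hl₀X : Tendsto (fun n => ∫ x in Ω \ X n, l₀ x ∂μ) atTop (𝓝 0) := by
    have := (hint l₀ hl₀).tendsto_setIntegral_nhds_zero (s := fun n => Ω \ X n)
      (by simpa only [Function.comp_def, Measure.restrict_eq_self _ sdiff_subset] using hΩX)
    simpa only [Measure.restrict_restrict_of_subset sdiff_subset] using this
  obtain ⟨n, hn⟩ := (hl₀X.eventually (gt_mem_nhds hε')).exists
  obtain ⟨l, hl, hle⟩ := hΛ.exists_setIntegral_le_of_isCompact hΩ hint hpos (hX n) (hXΩ n)
    (hcont n) hl₀ hε'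
  have hgX : ∫ x in X n, ⨅ l : Λ, l.1 x ∂μ ≤ ∫ x in Ω, ⨅ l : Λ, l.1 x ∂μ :=
    setIntegral_mono_set hg (ae_restrict_of_forall_mem hΩ fun x hx =>
      Real.iInf_nonneg fun l => hpos l l.2 x hx) (hXΩ n).eventuallyLE
  have hμX :
      (2 + μ.real (X n)) * (ε / (3 + μ.real Ω)) ≤ (2 + μ.real Ω) * (ε / (3 + μ.real Ω)) :=
    mul_le_mul_of_nonneg_right (by linarith [measureReal_mono (hXΩ n) hμΩ]) hε'.le
  have hbdd : BddBelow (range fun l : Λ => ∫ x in Ω, l.1 x ∂μ) :=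
    ⟨0, by rintro _ ⟨l, rfl⟩; exact setIntegral_nonneg hΩ (hpos l l.2)⟩
  calc ⨅ l : Λ, ∫ x in Ω, l.1 x ∂μ ≤ ∫ x in Ω, l x ∂μ := ciInf_le hbdd ⟨l, hl⟩
    _ ≤ ∫ x in Ω, (⨅ l : Λ, l.1 x) ∂μ + (3 + μ.real Ω) * (ε / (3 + μ.real Ω)) := by linarith
    _ = ∫ x in Ω, (⨅ l : Λ, l.1 x) ∂μ + ε := by field_simp

end InfStable

theorem statement12_general
    (d : ℕ)
    (Ω : Set (Fin d → ℝ)) (hΩo : IsOpen Ω) (hΩb : Bornology.IsBounded Ω)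
    (Λ : Set ((Fin d → ℝ) → ℝ)) (hne : Λ.Nonempty)
    (hint : ∀ l ∈ Λ, IntegrableOn l Ω)
    (hpos : ∀ l ∈ Λ, ∀ x ∈ Ω, 0 ≤ l x)
    (hstable : ∀ N : ℕ, 0 < N →
      ∀ lam : Fin N → (Fin d → ℝ) → ℝ, (∀ j, lam j ∈ Λ) →
      ∀ φ : Fin N → (Fin d → ℝ) → ℝ,
        (∀ j, ContDiffOn ℝ 1 (φ j) (closure Ω)) →
        (∀ j, ∀ x ∈ closure Ω, φ j x ∈ Set.Icc (0 : ℝ) 1) →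
        (∀ x ∈ closure Ω, ∑ j, φ j x = 1) →
        ∃ l ∈ Λ, ∀ x ∈ Ω, l x ≤ ∑ j, φ j x * lam j x)
    (hlusin : ∀ δ > (0 : ℝ), ∃ X : Set (Fin d → ℝ),
      IsCompact X ∧ X ⊆ Ω ∧ volume (Ω \ X) ≤ ENNReal.ofReal δ ∧
      ∀ l ∈ Λ, ContinuousOn l X) :
    AEMeasurable (fun x => ⨅ l : Λ, l.1 x) (volume.restrict Ω) ∧
    (⨅ l : Λ, ∫ x in Ω, l.1 x) = ∫ x in Ω, ⨅ l : Λ, l.1 x := by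
  have hΩ := hΩo.measurableSet
  choose X hXc hXΩ hXμ hXcont using fun n : ℕ => hlusin (1 / (n + 1)) Nat.one_div_pos_of_nat
  have hΩX : Tendsto (fun n => volume (Ω \ X n)) atTop (𝓝 0) := by
    have := ENNReal.tendsto_ofReal tendsto_one_div_add_atTop_nhds_zero_nat
    rw [ENNReal.ofReal_zero] at this
    exact tendsto_of_tendsto_of_tendsto_of_le_of_le tendsto_const_nhds this (fun _ => bot_le) hXμ
  have hmeas := aemeasurable_restrict_iInf_of_tendsto_measure_sdiff hne hpos
    (fun n => (hXc n).measurableSet) hXΩ hΩX hXcont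
  have := hne.to_subtype
  obtain ⟨l₀, hl₀⟩ := hne
  have hle (l : Λ) (x : Fin d → ℝ) (hx : x ∈ Ω) : ⨅ l : Λ, l.1 x ≤ l.1 x :=
    ciInf_le (bddBelow_range_apply_of_nonneg hpos hx) l
  have hg : IntegrableOn (fun x => ⨅ l : Λ, l.1 x) Ω := by
    refine (hint l₀ hl₀).mono' hmeas.aestronglyMeasurable
      (ae_restrict_of_forall_mem hΩ fun x hx => ?_)
    rw [Real.norm_eq_abs, abs_of_nonneg (Real.iInf_nonneg fun l : Λ => hpos l.1 l.2 x hx)]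
    exact hle ⟨l₀, hl₀⟩ x hx
  refine ⟨hmeas, le_antisymm ?_
    (le_ciInf fun l : Λ => setIntegral_mono_on hg (hint l.1 l.2) hΩ (hle l))⟩
  exact InfStable.iInf_setIntegral_le (Λ := Λ) hstable hΩ hΩb.measure_lt_top.ne ⟨l₀, hl₀⟩ hint
    hpos hg hXc hXΩ hΩX hXcont

/-- **Commutation of infimum and integral for inf-stable families** (Lemma
`lemma commutativita`): if `Λ` is an inf-stable family of nonnegative integrable
functions on `Ω` which are simultaneously continuous outside sets of arbitrarily
small measure, then `inf_{λ∈Λ} ∫_Ω λ = ∫_Ω inf_{λ∈Λ} λ`. -/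
theorem statement12
    (d : ℕ) (hd : 0 < d)
    (Ω : Set (Fin d → ℝ)) (hΩo : IsOpen Ω) (hΩb : Bornology.IsBounded Ω)
    (Λ : Set ((Fin d → ℝ) → ℝ)) (hne : Λ.Nonempty)
    (hint : ∀ l ∈ Λ, IntegrableOn l Ω)
    (hpos : ∀ l ∈ Λ, ∀ x ∈ Ω, 0 ≤ l x)
    (hstable : ∀ N : ℕ, 0 < N →
      ∀ lam : Fin N → (Fin d → ℝ) → ℝ, (∀ j, lam j ∈ Λ) →
      ∀ φ : Fin N → (Fin d → ℝ) → ℝ,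
        (∀ j, ContDiffOn ℝ 1 (φ j) (closure Ω)) →
        (∀ j, ∀ x ∈ closure Ω, φ j x ∈ Set.Icc (0 : ℝ) 1) →
        (∀ x ∈ closure Ω, ∑ j, φ j x = 1) →
        ∃ l ∈ Λ, ∀ x ∈ Ω, l x ≤ ∑ j, φ j x * lam j x)
    (hlusin : ∀ δ > (0 : ℝ), ∃ X : Set (Fin d → ℝ),
      IsCompact X ∧ X ⊆ Ω ∧ volume (Ω \ X) ≤ ENNReal.ofReal δ ∧
      ∀ l ∈ Λ, ContinuousOn l X) :
    AEMeasurable (fun x => ⨅ l : Λ, l.1 x) (volume.restrict Ω) ∧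
    (⨅ l : Λ, ∫ x in Ω, l.1 x) = ∫ x in Ω, ⨅ l : Λ, l.1 x :=
  statement12_general d Ω hΩo hΩb Λ hne hint hpos hstable hlusin
end

section
/- Fundamental theorem on Young measures, lower semicontinuity part: Let u_h : D → S be a sequence of measurable functions generating a Young measure μ = (μ_x)_{x∈D} and satisfying the tightness condition. If f : D × S → [0, +∞) is measurable with respect to the product of the Lebesgue σ-algebra on D and the Borel σ-algebra on S, and f(x, ·) is continuous on S for every x ∈ D, then liminf_{h→∞} ∫_D f(x, u_h(x)) dx ≥ ∫_D f̄(x) dx, where f̄(x) := ∫_S f(x, z) dμ_x(z). -/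
open MeasureTheory Filter Topology
open scoped ENNReal ZeroAtInfty

variable {l : ℕ} {S : Type*} [MetricSpace S] [CompleteSpace S]
  [TopologicalSpace.SeparableSpace S] [LocallyCompactSpace S]
  [MeasurableSpace S] [BorelSpace S]

/-- `μ = (μ_x)_{x∈D}` is the Young measure generated by the sequence `u_h : D → S`. -/
def GeneratesYoung (D : Set (Fin l → ℝ)) (u : ℕ → (Fin l → ℝ) → S)
    (μ : (Fin l → ℝ) → Measure S) : Prop :=
  (∀ x, IsProbabilityMeasure (μ x)) ∧
  (∀ g : C₀(S, ℝ), AEMeasurable (fun x => ∫ z, g z ∂(μ x)) (volume.restrict D)) ∧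
  ∀ φ : (Fin l → ℝ) → ℝ, IntegrableOn φ D →
    ∀ g : C₀(S, ℝ),
      Tendsto (fun h => ∫ x in D, φ x * g (u h x)) atTop
        (𝓝 (∫ x in D, φ x * ∫ z, g z ∂(μ x)))

/-- The sequence `u_h` satisfies the tightness condition on `D`. -/
def TightSeq (D : Set (Fin l → ℝ)) (u : ℕ → (Fin l → ℝ) → S) : Prop :=
  ∀ δ > (0 : ℝ), ∃ K : Set S, IsCompact K ∧
    ∀ h, volume {x ∈ D | u h x ∉ K} ≤ ENNReal.ofReal δ

/-!
Fix a countable family `(G n)` of nonnegative compactly supported bumps (dense centres, radii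
`1 / (m + 1)`, rational heights) such that every nonnegative lower semicontinuous function on
`S` is the supremum of the members of the family lying below it. Then `f(x, ·) = ⨆ N, Φ N x`
with `Φ N x = max {G n | n < N, G n ≤ f(x, ·)}`, increasing in `N`. For fixed `N`, `Φ N x` runs
through finitely many test functions, each on a measurable piece of `D`; testing the
Young-measure convergence against the indicators of these pieces gives
`∫_D Φ N x (u_h x) dx → ∫_D ∫_S Φ N x dμ_x dx`, and `Φ N ≤ f` bounds the limit by the liminf.
Monotone convergence in `N` concludes.
-/

open scoped NNReal CompactlySupported

namespace CompactlySupportedContinuousMap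

variable {X : Type*} [TopologicalSpace X]

instance : OrderBot C_c(X, ℝ≥0) where
  bot := 0
  bot_le _ _ := zero_le

theorem finsetSup_apply {ι : Type*} (s : Finset ι) (f : ι → C_c(X, ℝ≥0)) (x : X) :
    s.sup f x = s.sup fun i => f i x := by
  induction s using Finset.cons_induction with
  | empty => rfl
  | cons i s _ ih => simp [ih]

theorem exists_eqOn_one_eqOn_zero_of_isCompact [RegularSpace X] [LocallyCompactSpace X]
    {s t : Set X} (hs : IsCompact s) (ht : IsClosed t) (hd : Disjoint s t) :
    ∃ g : C_c(X, ℝ≥0), Set.EqOn g 1 s ∧ Set.EqOn g 0 t ∧ ∀ x, g x ≤ 1 := by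
  obtain ⟨f, hfs, hft, hfc, hf01⟩ := exists_continuous_one_zero_of_isCompact hs ht hd
  refine ⟨(⟨f, hfc⟩ : C_c(X, ℝ)).nnrealPart, fun x hx => ?_, fun x hx => ?_, fun x => ?_⟩
  · simp [nnrealPart_apply, hfs hx]
  · simp [nnrealPart_apply, hft hx]
  · simpa [nnrealPart_apply] using (hf01 x).2

end CompactlySupportedContinuousMap

open CompactlySupportedContinuousMap in
theorem Metric.exists_compactlySupported_bump {S : Type*} [MetricSpace S]
    [LocallyCompactSpace S] (p : S) {r : ℝ} (hr : 0 < r) :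
    ∃ g : C_c(S, ℝ≥0), (∀ w, g w ≤ 1) ∧ (∀ w, 2 * r ≤ dist w p → g w = 0) ∧
      (IsCompact (Metric.closedBall p r) → Set.EqOn g 1 (Metric.closedBall p r)) := by
  by_cases hK : IsCompact (Metric.closedBall p r)
  · have hd : Disjoint (Metric.closedBall p r) (Metric.ball p (2 * r))ᶜ :=
      Set.disjoint_compl_right_iff_subset.2 (Metric.closedBall_subset_ball (by linarith))
    obtain ⟨g, h1, h0, hle⟩ :=
      exists_eqOn_one_eqOn_zero_of_isCompact hK Metric.isOpen_ball.isClosed_compl hd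
    exact ⟨g, hle, fun w hw => h0 (by simpa using hw), fun _ => h1⟩
  · exact ⟨0, fun _ => zero_le_one, fun _ _ => rfl, fun h => absurd h hK⟩

theorem exists_denseSeq_isCompact_closedBall_subset {S : Type*} [MetricSpace S]
    [TopologicalSpace.SeparableSpace S] [LocallyCompactSpace S] [Nonempty S] {z : S}
    {U : Set S} (hU : U ∈ 𝓝 z) :
    ∃ k m : ℕ, let c := TopologicalSpace.denseSeq S k; let r : ℝ := 1 / (m + 1)
      z ∈ Metric.closedBall c r ∧ IsCompact (Metric.closedBall c r) ∧
        Metric.ball c (2 * r) ⊆ U := by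
  obtain ⟨K, hK, hKz⟩ := exists_compact_mem_nhds z
  obtain ⟨ε, hε, hball⟩ := Metric.mem_nhds_iff.1 (Filter.inter_mem hKz hU)
  obtain ⟨m, hm⟩ := exists_nat_one_div_lt (by positivity : 0 < ε / 3)
  have hr : (0 : ℝ) < 1 / (m + 1) := by positivity
  obtain ⟨k, hk⟩ := Metric.denseRange_iff.1 (TopologicalSpace.denseRange_denseSeq S) z _ hr
  set c := TopologicalSpace.denseSeq S k
  have hnear : ∀ w, dist w c < 2 * (1 / (m + 1)) → w ∈ K ∩ U := fun w hw =>
    hball (by rw [Metric.mem_ball]; linarith [dist_triangle w c z, dist_comm z c])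
  refine ⟨k, m, Metric.mem_closedBall.2 hk.le, ?_, fun w hw => (hnear w hw).2⟩
  exact hK.of_isClosed_subset Metric.isClosed_closedBall fun w hw =>
    (hnear w (by rw [Metric.mem_closedBall] at hw; linarith)).1

theorem exists_seq_compactlySupported_lt_of_lowerSemicontinuous (S : Type*) [MetricSpace S]
    [TopologicalSpace.SeparableSpace S] [LocallyCompactSpace S] :
    ∃ G : ℕ → C_c(S, ℝ≥0), ∀ φ : S → ℝ≥0∞, LowerSemicontinuous φ → ∀ z, ∀ b < φ z,
      ∃ n, (∀ w, (G n w : ℝ≥0∞) ≤ φ w) ∧ b < G n z := by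
  rcases isEmpty_or_nonempty S with hS | hS
  · exact ⟨0, fun _ _ z => isEmptyElim z⟩
  choose bump hbump1 hbump0 hbumpK using fun k m : ℕ =>
    Metric.exists_compactlySupported_bump (TopologicalSpace.denseSeq S k)
      (by positivity : (0 : ℝ) < 1 / (m + 1))
  obtain ⟨e, he⟩ := exists_surjective_nat (ℕ × ℕ × ℚ)
  refine ⟨fun n => ((e n).2.2 : ℝ).toNNReal • bump (e n).1 (e n).2.1, ?_⟩
  intro φ hφ z b hb
  obtain ⟨q, -, hbq, hqφ⟩ := ENNReal.lt_iff_exists_rat_btwn.1 hb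
  set a : ℝ≥0 := (q : ℝ).toNNReal
  obtain ⟨k, m, hz, hK, hU⟩ :=
    exists_denseSeq_isCompact_closedBall_subset ((hφ.isOpen_preimage a).mem_nhds hqφ)
  obtain ⟨n, hn⟩ := he (k, m, q)
  refine ⟨n, fun w => ?_, ?_⟩
  · simp only [hn, CompactlySupportedContinuousMap.smul_apply, smul_eq_mul, ENNReal.coe_mul]
    by_cases hw : 2 * (1 / (m + 1)) ≤ dist w (TopologicalSpace.denseSeq S k)
    · simp [hbump0 k m w hw]
    · calc (a : ℝ≥0∞) * bump k m w ≤ a * 1 := by gcongr; exact_mod_cast hbump1 k m w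
        _ ≤ φ w := by simpa using (hU (Metric.mem_ball.2 (not_le.1 hw)) : a < φ w).le
  · simpa [hn, hbumpK k m hK hz] using hbq

theorem nullMeasurableSet_setOf_mem_and_forall_le {X Y : Type*} [MeasurableSpace X]
    [TopologicalSpace Y] [TopologicalSpace.SeparableSpace Y] {ν : Measure X} {D : Set X}
    (hD : NullMeasurableSet D ν) {F : X → Y → ℝ≥0∞} (hFc : ∀ x ∈ D, Continuous (F x))
    (hFm : ∀ y, AEMeasurable (fun x => F x y) ν) {g : Y → ℝ≥0∞} (hg : Continuous g) :
    NullMeasurableSet {x | x ∈ D ∧ ∀ y, g y ≤ F x y} ν := by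
  obtain ⟨s, hs, hsd⟩ := TopologicalSpace.exists_countable_dense Y
  have hset : {x | x ∈ D ∧ ∀ y, g y ≤ F x y} = D ∩ ⋂ y ∈ s, {x | g y ≤ F x y} := by
    ext x
    simp only [Set.mem_ofPred_eq, Set.mem_inter_iff, Set.mem_iInter]
    refine ⟨fun ⟨hx, h⟩ => ⟨hx, fun y _ => h y⟩, fun ⟨hx, h⟩ => ⟨hx, fun y => ?_⟩⟩
    exact (isClosed_le hg (hFc x hx)).closure_subset_iff.2 h (hsd y)
  rw [hset]
  exact hD.inter (.biInter hs fun y _ => nullMeasurableSet_le aemeasurable_const (hFm y))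

section ActiveIndices

variable {X : Type*} (A : ℕ → Set X)

open Classical in
noncomputable def activeIndices (N : ℕ) (x : X) : Finset ℕ := {n ∈ Finset.range N | x ∈ A n}

variable {A}

theorem mem_activeIndices {N n : ℕ} {x : X} : n ∈ activeIndices A N x ↔ n < N ∧ x ∈ A n := by
  classical
  simp [activeIndices]

theorem activeIndices_subset_range (N : ℕ) (x : X) : activeIndices A N x ⊆ Finset.range N :=
  fun _ hn => Finset.mem_range.2 (mem_activeIndices.1 hn).1

theorem monotone_activeIndices (x : X) : Monotone fun N => activeIndices A N x :=
  fun _ _ hNN' _ hn => by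
    rw [mem_activeIndices] at hn ⊢
    exact ⟨hn.1.trans_le hNN', hn.2⟩

theorem nullMeasurableSet_activeIndices_eq [MeasurableSpace X] {ν : Measure X}
    (hA : ∀ n, NullMeasurableSet (A n) ν) (N : ℕ) (σ : Finset ℕ) :
    NullMeasurableSet {x | activeIndices A N x = σ} ν := by
  have hset : {x | activeIndices A N x = σ} = ⋂ n, {x | n < N ∧ x ∈ A n ↔ n ∈ σ} := by
    ext x
    simp [Finset.ext_iff, mem_activeIndices]
  rw [hset]
  refine .iInter fun n => ?_
  by_cases hn : n < N <;> by_cases hσ : n ∈ σ <;>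
    simp only [hn, hσ, true_and, false_and, iff_true, iff_false]
  exacts [hA n, (hA n).compl, .empty, .univ]

end ActiveIndices

open CompactlySupportedContinuousMap in
theorem iSup_finsetSup_activeIndices_eq {X S : Type*} [TopologicalSpace S]
    {G : ℕ → C_c(S, ℝ≥0)} {φ : S → ℝ≥0∞}
    (hG : ∀ z, ∀ b < φ z, ∃ n, (∀ w, (G n w : ℝ≥0∞) ≤ φ w) ∧ b < G n z)
    {A : ℕ → Set X} {x : X} (hA : ∀ n, x ∈ A n ↔ ∀ w, (G n w : ℝ≥0∞) ≤ φ w) (z : S) :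
    ⨆ N, ((activeIndices A N x).sup G z : ℝ≥0∞) = φ z := by
  refine le_antisymm (iSup_le fun N => ?_) (le_of_forall_lt fun b hb => ?_)
  · rw [finsetSup_apply, ENNReal.coe_finset_sup, Finset.sup_le_iff]
    exact fun n hn => (hA n).1 (mem_activeIndices.1 hn).2 z
  · obtain ⟨n, hn, hbn⟩ := hG z b hb
    have hmem : n ∈ activeIndices A (n + 1) x :=
      mem_activeIndices.2 ⟨n.lt_succ_self, (hA n).2 hn⟩
    exact lt_iSup_iff.2
      ⟨n + 1, hbn.trans_le (ENNReal.coe_le_coe.2 (le_def.1 (Finset.le_sup hmem) z))⟩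

theorem ofReal_integral_indicator_one_mul {X : Type*} [MeasurableSpace X] {ν : Measure X}
    [IsFiniteMeasure ν] {E : Set X} (hE : NullMeasurableSet E ν) {F : X → ℝ}
    (hFm : AEStronglyMeasurable F ν) (hF0 : ∀ x, 0 ≤ F x) {C : ℝ} (hFC : ∀ x, F x ≤ C) :
    ENNReal.ofReal (∫ x, E.indicator 1 x * F x ∂ν) =
      ∫⁻ x, E.indicator (fun x => ENNReal.ofReal (F x)) x ∂ν := by
  have hind : (fun x => E.indicator 1 x * F x) = E.indicator F := by
    ext x
    simpa using (Set.indicator_mul_left E 1 F).symm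
  have hint : Integrable F ν :=
    .of_bound hFm C (.of_forall fun x => by rw [Real.norm_of_nonneg (hF0 x)]; exact hFC x)
  rw [hind, ofReal_integral_eq_lintegral_ofReal (hint.indicator₀ hE)
    (.of_forall (Set.indicator_nonneg fun x _ => hF0 x))]
  exact lintegral_congr fun x => (congrFun (Set.indicator_comp_of_zero ENNReal.ofReal_zero) x).symm

theorem Finset.sum_indicator_setOf_eq {X ι M : Type*} [AddCommMonoid M] (T : Finset ι)
    {p : X → ι} (hpT : ∀ x, p x ∈ T) (F : ι → X → M) (x : X) :
    ∑ i ∈ T, {y | p y = i}.indicator (F i) x = F (p x) x := by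
  classical
  simp [Set.indicator_apply, Finset.sum_ite_eq, hpT]

section FinitePartition

variable {X ι : Type*} [MeasurableSpace X] {ν : Measure X} (T : Finset ι) {p : X → ι}

theorem aemeasurable_of_finset_partition (hpT : ∀ x, p x ∈ T)
    (hp : ∀ i, NullMeasurableSet {x | p x = i} ν) {F : ι → X → ℝ≥0∞}
    (hF : ∀ i, AEMeasurable (F i) ν) : AEMeasurable (fun x => F (p x) x) ν :=
  (Finset.aemeasurable_fun_sum T fun i _ => (hF i).indicator₀ (hp i)).congr
    (.of_forall (Finset.sum_indicator_setOf_eq T hpT F))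

theorem lintegral_eq_sum_of_finset_partition (hpT : ∀ x, p x ∈ T)
    (hp : ∀ i, NullMeasurableSet {x | p x = i} ν) {F : ι → X → ℝ≥0∞}
    (hF : ∀ i, AEMeasurable (F i) ν) :
    ∫⁻ x, F (p x) x ∂ν = ∑ i ∈ T, ∫⁻ x, {y | p y = i}.indicator (F i) x ∂ν := by
  rw [← lintegral_finsetSum' _ fun i _ => (hF i).indicator₀ (hp i)]
  simp_rw [Finset.sum_indicator_setOf_eq T hpT]

end FinitePartition

namespace GeneratesYoung

variable {l : ℕ} {S : Type*} [MetricSpace S] [MeasurableSpace S] [BorelSpace S]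
  {D : Set (Fin l → ℝ)} {u : ℕ → (Fin l → ℝ) → S} {μ : (Fin l → ℝ) → Measure S}

theorem ofReal_integral_eq_lintegral (hgen : GeneratesYoung D u μ) {g : C₀(S, ℝ)}
    (hg : ∀ z, 0 ≤ g z) (x : Fin l → ℝ) :
    ENNReal.ofReal (∫ z, g z ∂μ x) = ∫⁻ z, ENNReal.ofReal (g z) ∂μ x :=
  have := hgen.1 x
  ofReal_integral_eq_lintegral_ofReal (g.toBCF.integrable _) (.of_forall hg)

theorem aemeasurable_lintegral (hgen : GeneratesYoung D u μ) {g : C₀(S, ℝ)}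
    (hg : ∀ z, 0 ≤ g z) :
    AEMeasurable (fun x => ∫⁻ z, ENNReal.ofReal (g z) ∂μ x) (volume.restrict D) := by
  simp_rw [← hgen.ofReal_integral_eq_lintegral hg]
  exact ENNReal.measurable_ofReal.comp_aemeasurable (hgen.2.1 g)

theorem tendsto_lintegral_indicator (hgen : GeneratesYoung D u μ) (hD : volume D ≠ ∞)
    (hu : ∀ h, AEMeasurable (u h) (volume.restrict D)) {E : Set (Fin l → ℝ)}
    (hE : NullMeasurableSet E (volume.restrict D)) {g : C₀(S, ℝ)} (hg : ∀ z, 0 ≤ g z) :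
    Tendsto (fun h => ∫⁻ x in D, E.indicator (fun x => ENNReal.ofReal (g (u h x))) x) atTop
      (𝓝 (∫⁻ x in D, E.indicator (fun x => ∫⁻ z, ENNReal.ofReal (g z) ∂μ x) x)) := by
  have : IsFiniteMeasure (volume.restrict D) := isFiniteMeasure_restrict.2 hD
  have hg_le : ∀ z, g z ≤ ‖g.toBCF‖ := fun z => (le_abs_self _).trans (g.toBCF.norm_coe_le_norm z)
  have hμg_le : ∀ x, ∫ z, g z ∂μ x ≤ ‖g.toBCF‖ := fun x => by
    have := hgen.1 x
    exact (le_abs_self _).trans (g.toBCF.norm_integral_le_norm (μ := μ x))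
  have hlim := (ENNReal.continuous_ofReal.tendsto _).comp
    (hgen.2.2 (E.indicator 1) ((integrable_const 1).indicator₀ hE) g)
  rw [Function.comp_def, ofReal_integral_indicator_one_mul hE (hgen.2.1 g).aestronglyMeasurable
    (fun x => integral_nonneg hg) hμg_le] at hlim
  simp_rw [hgen.ofReal_integral_eq_lintegral hg] at hlim
  exact hlim.congr fun h => ofReal_integral_indicator_one_mul hE
    (g.continuous.measurable.comp_aemeasurable (hu h)).aestronglyMeasurable (fun x => hg _)
    fun x => hg_le _

theorem tendsto_lintegral_of_finset_partition (hgen : GeneratesYoung D u μ)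
    (hD : volume D ≠ ∞) (hu : ∀ h, AEMeasurable (u h) (volume.restrict D)) {ι : Type*}
    (T : Finset ι) {p : (Fin l → ℝ) → ι} (hpT : ∀ x, p x ∈ T)
    (hp : ∀ i, NullMeasurableSet {x | p x = i} (volume.restrict D)) {g : ι → C₀(S, ℝ)}
    (hg : ∀ i z, 0 ≤ g i z) :
    Tendsto (fun h => ∫⁻ x in D, ENNReal.ofReal (g (p x) (u h x))) atTop
      (𝓝 (∫⁻ x in D, ∫⁻ z, ENNReal.ofReal (g (p x) z) ∂μ x)) := by
  rw [lintegral_eq_sum_of_finset_partition T hpT hp fun i => hgen.aemeasurable_lintegral (hg i)]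
  simp_rw [lintegral_eq_sum_of_finset_partition T hpT hp
    (F := fun i x => ENNReal.ofReal (g i (u _ x))) fun i =>
      ENNReal.measurable_ofReal.comp_aemeasurable
        ((g i).continuous.measurable.comp_aemeasurable (hu _))]
  exact tendsto_finsetSum T fun i _ => hgen.tendsto_lintegral_indicator hD hu (hp i) (hg i)

end GeneratesYoung

theorem lintegral_lintegral_le_liminf_of_eq_iSup {X Y : Type*} [MeasurableSpace X]
    [MeasurableSpace Y] {ν : Measure X} {μ : X → Measure Y} {u : ℕ → X → Y}
    {F : X → Y → ℝ≥0∞} {Φ : ℕ → X → Y → ℝ≥0∞} (hΦm : ∀ N x, Measurable (Φ N x))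
    (hΦmono : ∀ x y, Monotone fun N => Φ N x y) (hF : ∀ᵐ x ∂ν, ∀ y, F x y = ⨆ N, Φ N x y)
    (hΦint : ∀ N, AEMeasurable (fun x => ∫⁻ y, Φ N x y ∂μ x) ν)
    (hlim : ∀ N, Tendsto (fun h => ∫⁻ x, Φ N x (u h x) ∂ν) atTop
      (𝓝 (∫⁻ x, ∫⁻ y, Φ N x y ∂μ x ∂ν))) :
    ∫⁻ x, ∫⁻ y, F x y ∂μ x ∂ν ≤ liminf (fun h => ∫⁻ x, F x (u h x) ∂ν) atTop := by
  have hΦF : ∀ N h, ∫⁻ x, Φ N x (u h x) ∂ν ≤ ∫⁻ x, F x (u h x) ∂ν := fun N h =>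
    lintegral_mono_ae (hF.mono fun x hx => (hx _).symm ▸ le_iSup (fun N => Φ N x (u h x)) N)
  calc ∫⁻ x, ∫⁻ y, F x y ∂μ x ∂ν = ∫⁻ x, ⨆ N, ∫⁻ y, Φ N x y ∂μ x ∂ν := by
        refine lintegral_congr_ae (hF.mono fun x hx => ?_)
        simp_rw [hx]
        exact lintegral_iSup (hΦm · x) fun N N' h y => hΦmono x y h
    _ = ⨆ N, ∫⁻ x, ∫⁻ y, Φ N x y ∂μ x ∂ν :=
        lintegral_iSup' hΦint (.of_forall fun x N N' h => lintegral_mono fun y => hΦmono x y h)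
    _ ≤ liminf (fun h => ∫⁻ x, F x (u h x) ∂ν) atTop := iSup_le fun N =>
        (hlim N).liminf_eq ▸ liminf_le_liminf (.of_forall (hΦF N))

theorem statement13_general
    (l : ℕ) (S : Type*) [MetricSpace S]
    [TopologicalSpace.SeparableSpace S] [LocallyCompactSpace S]
    [MeasurableSpace S] [BorelSpace S]
    (D : Set (Fin l → ℝ)) (hDm : MeasurableSet D) (hDb : Bornology.IsBounded D)
    (u : ℕ → (Fin l → ℝ) → S) (hu : ∀ h, AEMeasurable (u h) (volume.restrict D))
    (μ : (Fin l → ℝ) → Measure S)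
    (hgen : GeneratesYoung D u μ)
    (f : (Fin l → ℝ) → S → ℝ)
    (hfc : ∀ x ∈ D, Continuous (f x))
    (hfm : ∀ z, AEMeasurable (fun x => f x z) (volume.restrict D)) :
    (∫⁻ x in D, ∫⁻ z, ENNReal.ofReal (f x z) ∂(μ x)) ≤
      Filter.liminf (fun h => ∫⁻ x in D, ENNReal.ofReal (f x (u h x))) atTop := by
  obtain ⟨G, hG⟩ := exists_seq_compactlySupported_lt_of_lowerSemicontinuous S
  set F : (Fin l → ℝ) → S → ℝ≥0∞ := fun x z => ENNReal.ofReal (f x z)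
  have hFc : ∀ x ∈ D, Continuous (F x) := fun x hx => ENNReal.continuous_ofReal.comp (hfc x hx)
  set A : ℕ → Set (Fin l → ℝ) := fun n => {x | x ∈ D ∧ ∀ z, (G n z : ℝ≥0∞) ≤ F x z}
  have hA : ∀ n, NullMeasurableSet (A n) (volume.restrict D) := fun n =>
    nullMeasurableSet_setOf_mem_and_forall_le hDm.nullMeasurableSet hFc
      (fun z => ENNReal.measurable_ofReal.comp_aemeasurable (hfm z))
      (ENNReal.continuous_coe.comp (G n).continuous)
  set g : Finset ℕ → C₀(S, ℝ) := fun σ => (σ.sup G).toReal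
  have hg0 : ∀ σ z, 0 ≤ g σ z := fun σ z => by simp [g]
  have hg : ∀ σ z, ENNReal.ofReal (g σ z) = (σ.sup G z : ℝ≥0∞) := fun σ z => by simp [g]
  have hpT : ∀ N x, activeIndices A N x ∈ (Finset.range N).powerset := fun N x =>
    Finset.mem_powerset.2 (activeIndices_subset_range N x)
  set Φ : ℕ → (Fin l → ℝ) → S → ℝ≥0∞ := fun N x z => ENNReal.ofReal (g (activeIndices A N x) z)
  have hΦmono : ∀ x z, Monotone fun N => Φ N x z := fun x z N N' hNN' => by
    simp only [Φ, hg]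
    exact ENNReal.coe_le_coe.2 (CompactlySupportedContinuousMap.le_def.1
      (Finset.sup_mono (monotone_activeIndices x hNN')) z)
  have hFΦ : ∀ᵐ x ∂volume.restrict D, ∀ z, F x z = ⨆ N, Φ N x z :=
    (ae_restrict_mem hDm).mono fun x hx z => by
      simp only [Φ, hg]
      exact (iSup_finsetSup_activeIndices_eq (hG (F x) (hFc x hx).lowerSemicontinuous)
        (fun n => and_iff_right hx) z).symm
  exact lintegral_lintegral_le_liminf_of_eq_iSup
    (fun N x => ENNReal.measurable_ofReal.comp (g _).continuous.measurable) hΦmono hFΦ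
    (fun N => aemeasurable_of_finset_partition _ (hpT N) (nullMeasurableSet_activeIndices_eq hA N)
      fun σ => hgen.aemeasurable_lintegral (hg0 σ))
    fun N => hgen.tendsto_lintegral_of_finset_partition hDb.measure_lt_top.ne hu _ (hpT N)
      (nullMeasurableSet_activeIndices_eq hA N) hg0

/-- **Fundamental theorem on Young measures, lower semicontinuity part**: for a
nonnegative Carathéodory integrand `f`,
`liminf_h ∫_D f(x, u_h(x)) dx ≥ ∫_D ∫_S f(x,z) dμ_x(z) dx`. -/
theorem statement13
    (l : ℕ) (hl : 0 < l) (S : Type*) [MetricSpace S] [CompleteSpace S]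
    [TopologicalSpace.SeparableSpace S] [LocallyCompactSpace S]
    [MeasurableSpace S] [BorelSpace S]
    (D : Set (Fin l → ℝ)) (hDm : MeasurableSet D) (hDb : Bornology.IsBounded D)
    (u : ℕ → (Fin l → ℝ) → S) (hu : ∀ h, AEMeasurable (u h) (volume.restrict D))
    (μ : (Fin l → ℝ) → Measure S)
    (hgen : GeneratesYoung D u μ) (htight : TightSeq D u)
    (f : (Fin l → ℝ) → S → ℝ)
    (hf0 : ∀ x ∈ D, ∀ z, 0 ≤ f x z)
    (hfc : ∀ x ∈ D, Continuous (f x))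
    (hfm : ∀ z, AEMeasurable (fun x => f x z) (volume.restrict D)) :
    (∫⁻ x in D, ∫⁻ z, ENNReal.ofReal (f x z) ∂(μ x)) ≤
      Filter.liminf (fun h => ∫⁻ x in D, ENNReal.ofReal (f x (u h x))) atTop :=
  statement13_general l S D hDm hDb u hu μ hgen f hfc hfm
end
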